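/- arXiv:2503.14165 — 5 statements merged into one kernel-verified Lean document; each statement's English description precedes it below -/
import Mathlib

section
/- Let (A, A'; (ρ0,ρ1), (μ0,μ1), (ρ0',ρ1'), (μ0',μ1')) be a matched pair of strict pre-Lie 2-algebras A = (A0, A1, d, ·) and A' = (A0', A1', d', ∘). Then (G(A), G(A'); (ρ0−μ0, ρ1−μ1), (ρ0'−μ0', ρ1'−μ1')) is a matched pair of strict Lie 2-algebras; that is, (ρ0−μ0, ρ1−μ1) is a strict representation of G(A) on d' : A1' → A0', (ρ0'−μ0', ρ1'−μ1') is a strict representation of G(A') on d : A1 → A0, and the six compatibility equations (L1)–(L6) hold for these representations. -/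
/-!
All axioms of the subadjacent structures are signed sums of pre-Lie axioms: the Jacobi
identity is the cyclic sum of the pre-Lie identity, `ρ - μ` is a representation because the
identities relating `μ` to `ρ`, antisymmetrized, are exactly the cross terms of `(ρ - μ)(ρ - μ)`,
and (L1), (L3), (L5) are (M14), (M12), (M8) - (M10) antisymmetrized and corrected by (M3), (M1),
(M5). The definition of a matched pair is symmetric in `A` and `A'`, so (L2), (L4), (L6) are the
same identities for the exchanged pair.
-/

namespace PreLie2

open Module TensorProduct

variable (K : Type*) [Field K]

/-- A two-argument map between modules is bilinear. -/
def IsBilin {M N P : Type*} [AddCommGroup M] [Module K M] [AddCommGroup N] [Module K N]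
    [AddCommGroup P] [Module K P] (f : M → N → P) : Prop :=
  (∀ m, IsLinearMap K (f m)) ∧ ∀ n, IsLinearMap K fun m => f m n

section TwoTerm

variable {A0 A1 : Type*} [AddCommGroup A0] [Module K A0] [AddCommGroup A1] [Module K A1]

/-- A strict pre-Lie `2`-algebra structure on the two-term complex `d : A1 → A0`. -/
structure IsStrictPreLie2 (d : A1 → A0) (m00 : A0 → A0 → A0)
    (m01 : A0 → A1 → A1) (m10 : A1 → A0 → A1) : Prop where
  d_lin : IsLinearMap K d
  m00_bilin : IsBilin K m00
  m01_bilin : IsBilin K m01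
  m10_bilin : IsBilin K m10
  d_m01 : ∀ x a, d (m01 x a) = m00 x (d a)
  d_m10 : ∀ a x, d (m10 a x) = m00 (d a) x
  d_mix : ∀ a b, m01 (d a) b = m10 a (d b)
  preLie0 : ∀ x y z, m00 x (m00 y z) - m00 (m00 x y) z = m00 y (m00 x z) - m00 (m00 y x) z
  preLie1 : ∀ x y a, m01 x (m01 y a) - m01 (m00 x y) a = m01 y (m01 x a) - m01 (m00 y x) a
  preLie2 : ∀ a x y, m10 a (m00 x y) - m10 (m10 a x) y = m01 x (m10 a y) - m10 (m01 x a) y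

/-- A strict Lie `2`-algebra structure on the two-term complex `δ : A1 → A0`. -/
structure IsStrictLie2 (δ : A1 → A0) (br0 : A0 → A0 → A0) (br1 : A0 → A1 → A1) : Prop where
  δ_lin : IsLinearMap K δ
  br0_bilin : IsBilin K br0
  br1_bilin : IsBilin K br1
  skew : ∀ x y, br0 x y = -br0 y x
  δ_br1 : ∀ x a, δ (br1 x a) = br0 x (δ a)
  br1_δ : ∀ a b, br1 (δ a) b = -br1 (δ b) a
  jacobi0 : ∀ x y z, br0 (br0 x y) z + br0 (br0 y z) x + br0 (br0 z x) y = 0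
  jacobi1 : ∀ x y b, br1 x (br1 y b) - br1 y (br1 x b) - br1 (br0 x y) b = 0

/-- A strict associative `2`-algebra structure on the two-term complex `d : A1 → A0`. -/
structure IsStrictAssoc2 (d : A1 → A0) (m00 : A0 → A0 → A0)
    (m01 : A0 → A1 → A1) (m10 : A1 → A0 → A1) : Prop where
  d_lin : IsLinearMap K d
  m00_bilin : IsBilin K m00
  m01_bilin : IsBilin K m01
  m10_bilin : IsBilin K m10
  d_m01 : ∀ x a, d (m01 x a) = m00 x (d a)
  d_m10 : ∀ a x, d (m10 a x) = m00 (d a) x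
  d_mix : ∀ a b, m01 (d a) b = m10 a (d b)
  assoc000 : ∀ x y z, m00 x (m00 y z) = m00 (m00 x y) z
  assoc001 : ∀ x y a, m01 x (m01 y a) = m01 (m00 x y) a
  assoc010 : ∀ x a y, m01 x (m10 a y) = m10 (m01 x a) y
  assoc100 : ∀ a x y, m10 a (m00 x y) = m10 (m10 a x) y

end TwoTerm

/-- A pre-Lie algebra structure. -/
structure IsPreLie {B : Type*} [AddCommGroup B] [Module K B] (mul : B → B → B) : Prop where
  bilin : IsBilin K mul
  preLie : ∀ x y z, mul (mul x y) z - mul x (mul y z) = mul (mul y x) z - mul y (mul x z)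

section Rep

variable {g0 g1 V0 V1 : Type*}
  [AddCommGroup g0] [Module K g0] [AddCommGroup g1] [Module K g1]
  [AddCommGroup V0] [Module K V0] [AddCommGroup V1] [Module K V1]

/-- A strict representation of a strict Lie 2-algebra `(g0, g1, δ, br0, br1)` on the
two-term complex `par : V1 → V0`. -/
structure IsStrictRepLie2 (δ : g1 → g0) (br0 : g0 → g0 → g0) (br1 : g0 → g1 → g1)
    (par : V1 → V0) (ρ00 : g0 → V0 → V0) (ρ01 : g0 → V1 → V1) (ρ1 : g1 → V0 → V1) : Prop where
  ρ00_bilin : IsBilin K ρ00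
  ρ01_bilin : IsBilin K ρ01
  ρ1_bilin : IsBilin K ρ1
  chain : ∀ x m, ρ00 x (par m) = par (ρ01 x m)
  comp0 : ∀ a v, ρ00 (δ a) v = par (ρ1 a v)
  comp1 : ∀ a m, ρ01 (δ a) m = ρ1 a (par m)
  rep00 : ∀ x y v, ρ00 (br0 x y) v = ρ00 x (ρ00 y v) - ρ00 y (ρ00 x v)
  rep01 : ∀ x y m, ρ01 (br0 x y) m = ρ01 x (ρ01 y m) - ρ01 y (ρ01 x m)
  rep1 : ∀ x a v, ρ1 (br1 x a) v = ρ01 x (ρ1 a v) - ρ1 a (ρ00 x v)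

/-- A strict representation of a strict pre-Lie 2-algebra `(g0, g1, d, m00, m01, m10)` on the
two-term complex `par : V1 → V0`. -/
structure IsStrictRepPreLie2 (d : g1 → g0) (m00 : g0 → g0 → g0) (m01 : g0 → g1 → g1)
    (m10 : g1 → g0 → g1) (par : V1 → V0)
    (ρ00 : g0 → V0 → V0) (ρ01 : g0 → V1 → V1) (ρ1 : g1 → V0 → V1)
    (μ00 : g0 → V0 → V0) (μ01 : g0 → V1 → V1) (μ1 : g1 → V0 → V1) : Prop where
  toRepLie : IsStrictRepLie2 K d (fun x y => m00 x y - m00 y x)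
    (fun x a => m01 x a - m10 a x) par ρ00 ρ01 ρ1
  μ00_bilin : IsBilin K μ00
  μ01_bilin : IsBilin K μ01
  μ1_bilin : IsBilin K μ1
  μchain : ∀ x m, μ00 x (par m) = par (μ01 x m)
  μcomp0 : ∀ a v, μ00 (d a) v = par (μ1 a v)
  μcomp1 : ∀ a m, μ01 (d a) m = μ1 a (par m)
  eqA0 : ∀ x y v, μ00 (m00 x y) v + μ00 y (ρ00 x v) - ρ00 x (μ00 y v) - μ00 y (μ00 x v) = 0
  eqA1 : ∀ x y m, μ01 (m00 x y) m + μ01 y (ρ01 x m) - ρ01 x (μ01 y m) - μ01 y (μ01 x m) = 0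
  eqB : ∀ x a v, μ1 (m01 x a) v - ρ01 x (μ1 a v) + μ1 a (ρ00 x v) - μ1 a (μ00 x v) = 0
  eqC : ∀ a x v, μ1 (m10 a x) v - ρ1 a (μ00 x v) + μ01 x (ρ1 a v) - μ01 x (μ1 a v) = 0

/-- An `O`-operator on a strict Lie 2-algebra associated to a strict representation. -/
structure IsOOperator (δ : g1 → g0) (br0 : g0 → g0 → g0) (br1 : g0 → g1 → g1)
    (par : V1 → V0) (ρ00 : g0 → V0 → V0) (ρ01 : g0 → V1 → V1) (ρ1 : g1 → V0 → V1)
    (T0 : V0 → g0) (T1 : V1 → g1) : Prop where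
  T0_lin : IsLinearMap K T0
  T1_lin : IsLinearMap K T1
  chain : ∀ m, T0 (par m) = δ (T1 m)
  eq0 : ∀ u v, T0 (ρ00 (T0 u) v - ρ00 (T0 v) u) = br0 (T0 u) (T0 v)
  eq1 : ∀ m v, T1 (ρ1 (T1 m) v - ρ01 (T0 v) m) = -br1 (T0 v) (T1 m)

end Rep

section Matched

variable {g0 g1 h0 h1 : Type*}
  [AddCommGroup g0] [Module K g0] [AddCommGroup g1] [Module K g1]
  [AddCommGroup h0] [Module K h0] [AddCommGroup h1] [Module K h1]

/-- A matched pair of strict Lie 2-algebras. -/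
structure IsMatchedPairLie2
    (δ : g1 → g0) (br0 : g0 → g0 → g0) (br1 : g0 → g1 → g1)
    (δ' : h1 → h0) (br0' : h0 → h0 → h0) (br1' : h0 → h1 → h1)
    (ν00 : g0 → h0 → h0) (ν01 : g0 → h1 → h1) (ν1 : g1 → h0 → h1)
    (ν00' : h0 → g0 → g0) (ν01' : h0 → g1 → g1) (ν1' : h1 → g0 → g1) : Prop where
  lie : IsStrictLie2 K δ br0 br1
  lie' : IsStrictLie2 K δ' br0' br1'
  rep : IsStrictRepLie2 K δ br0 br1 δ' ν00 ν01 ν1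
  rep' : IsStrictRepLie2 K δ' br0' br1' δ ν00' ν01' ν1'
  eqL1 : ∀ x' x y, ν00' x' (br0 x y) =
      br0 x (ν00' x' y) + br0 (ν00' x' x) y + ν00' (ν00 y x') x - ν00' (ν00 x x') y
  eqL2 : ∀ x x' y', ν00 x (br0' x' y') =
      br0' x' (ν00 x y') + br0' (ν00 x x') y' + ν00 (ν00' y' x) x' - ν00 (ν00' x' x) y'
  eqL3 : ∀ h' x y, ν1' h' (br0 x y) =
      br1 x (ν1' h' y) - br1 y (ν1' h' x) + ν1' (ν01 y h') x - ν1' (ν01 x h') y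
  eqL4 : ∀ h x' y', ν1 h (br0' x' y') =
      br1' x' (ν1 h y') - br1' y' (ν1 h x') + ν1 (ν01' y' h) x' - ν1 (ν01' x' h) y'
  eqL5 : ∀ x' x h, ν01' x' (br1 x h) =
      br1 x (ν01' x' h) + br1 (ν00' x' x) h + ν1' (ν1 h x') x - ν01' (ν00 x x') h
  eqL6 : ∀ x x' h', ν01 x (br1' x' h') =
      br1' x' (ν01 x h') + br1' (ν00 x x') h' + ν1 (ν1' h' x) x' - ν01 (ν00' x' x) h'

/-- A matched pair of strict pre-Lie 2-algebras. -/
structure IsMatchedPairPreLie2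
    (d : g1 → g0) (m00 : g0 → g0 → g0) (m01 : g0 → g1 → g1) (m10 : g1 → g0 → g1)
    (d' : h1 → h0) (n00 : h0 → h0 → h0) (n01 : h0 → h1 → h1) (n10 : h1 → h0 → h1)
    (ρ00 : g0 → h0 → h0) (ρ01 : g0 → h1 → h1) (ρ1 : g1 → h0 → h1)
    (μ00 : g0 → h0 → h0) (μ01 : g0 → h1 → h1) (μ1 : g1 → h0 → h1)
    (ρ00' : h0 → g0 → g0) (ρ01' : h0 → g1 → g1) (ρ1' : h1 → g0 → g1)
    (μ00' : h0 → g0 → g0) (μ01' : h0 → g1 → g1) (μ1' : h1 → g0 → g1) : Prop where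
  alg : IsStrictPreLie2 K d m00 m01 m10
  alg' : IsStrictPreLie2 K d' n00 n01 n10
  rep : IsStrictRepPreLie2 K d m00 m01 m10 d' ρ00 ρ01 ρ1 μ00 μ01 μ1
  rep' : IsStrictRepPreLie2 K d' n00 n01 n10 d ρ00' ρ01' ρ1' μ00' μ01' μ1'
  eqM1 : ∀ a' x y, μ1' a' (m00 x y - m00 y x) =
      m01 x (μ1' a' y) - m01 y (μ1' a' x) + μ1' (ρ01 y a') x - μ1' (ρ01 x a') y
  eqM2 : ∀ a x' y', μ1 a (n00 x' y' - n00 y' x') =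
      n01 x' (μ1 a y') - n01 y' (μ1 a x') + μ1 (ρ01' y' a) x' - μ1 (ρ01' x' a) y'
  eqM3 : ∀ z' x y, μ00' z' (m00 x y - m00 y x) =
      m00 x (μ00' z' y) - m00 y (μ00' z' x) + μ00' (ρ00 y z') x - μ00' (ρ00 x z') y
  eqM4 : ∀ z x' y', μ00 z (n00 x' y' - n00 y' x') =
      n00 x' (μ00 z y') - n00 y' (μ00 z x') + μ00 (ρ00' y' z) x' - μ00 (ρ00' x' z) y'
  eqM5 : ∀ y' x a, μ01' y' (m01 x a - m10 a x) =
      m01 x (μ01' y' a) - m10 a (μ00' y' x) + μ1' (ρ1 a y') x - μ01' (ρ00 x y') a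
  eqM6 : ∀ y x' a', μ01 y (n01 x' a' - n10 a' x') =
      n01 x' (μ01 y a') - n10 a' (μ00 y x') + μ1 (ρ1' a' y) x' - μ01 (ρ00' x' y) a'
  eqM7 : ∀ x y' a', ρ01 x (n01 y' a') =
      n01 (ρ00 x y' - μ00 x y') a' + ρ01 (μ00' y' x - ρ00' y' x) a'
        + n01 y' (ρ01 x a') + μ1 (μ1' a' x) y'
  eqM8 : ∀ x' y a, ρ01' x' (m01 y a) =
      m01 (ρ00' x' y - μ00' x' y) a + ρ01' (μ00 y x' - ρ00 y x') a
        + m01 y (ρ01' x' a) + μ1' (μ1 a x') y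
  eqM9 : ∀ x a' y', ρ01 x (n10 a' y') =
      n10 (ρ01 x a' - μ01 x a') y' + ρ1 (μ1' a' x - ρ1' a' x) y'
        + n10 a' (ρ00 x y') + μ01 (μ00' y' x) a'
  eqM10 : ∀ x' a y, ρ01' x' (m10 a y) =
      m10 (ρ01' x' a - μ01' x' a) y + ρ1' (μ1 a x' - ρ1 a x') y
        + m10 a (ρ00' x' y) + μ01' (μ00 y x') a
  eqM11 : ∀ a x' y', ρ1 a (n00 x' y') =
      n10 (ρ1 a x' - μ1 a x') y' + ρ1 (μ01' x' a - ρ01' x' a) y'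
        + n01 x' (ρ1 a y') + μ1 (μ01' y' a) x'
  eqM12 : ∀ a' x y, ρ1' a' (m00 x y) =
      m10 (ρ1' a' x - μ1' a' x) y + ρ1' (μ01 x a' - ρ01 x a') y
        + m01 x (ρ1' a' y) + μ1' (μ01 y a') x
  eqM13 : ∀ x y' z', ρ00 x (n00 y' z') =
      n00 (ρ00 x y' - μ00 x y') z' + ρ00 (μ00' y' x - ρ00' y' x) z'
        + n00 y' (ρ00 x z') + μ00 (μ00' z' x) y'
  eqM14 : ∀ x' y z, ρ00' x' (m00 y z) =
      m00 (ρ00' x' y - μ00' x' y) z + ρ00' (μ00 y x' - ρ00 y x') z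
        + m00 y (ρ00' x' z) + μ00' (μ00 z x') y

end Matched

variable {K} {M N P : Type*} [AddCommGroup M] [Module K M]
  [AddCommGroup N] [Module K N] [AddCommGroup P] [Module K P]

namespace IsBilin

variable {f g : M → N → P}

theorem map_sub_left (hf : IsBilin K f) (m m' : M) (n : N) : f (m - m') n = f m n - f m' n :=
  (hf.2 n).map_sub m m'

theorem map_sub_right (hf : IsBilin K f) (m : M) (n n' : N) : f m (n - n') = f m n - f m n' :=
  (hf.1 m).map_sub n n'

theorem flip (hf : IsBilin K f) : IsBilin K fun n m => f m n :=
  ⟨hf.2, hf.1⟩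

theorem sub (hf : IsBilin K f) (hg : IsBilin K g) : IsBilin K fun m n => f m n - g m n :=
  ⟨fun m => ⟨fun n n' => by simp only [(hf.1 m).map_add, (hg.1 m).map_add]; abel,
      fun c n => by simp only [(hf.1 m).map_smul, (hg.1 m).map_smul, smul_sub]⟩,
    fun n => ⟨fun m m' => by simp only [(hf.2 n).map_add, (hg.2 n).map_add]; abel,
      fun c m => by simp only [(hf.2 n).map_smul, (hg.2 n).map_smul, smul_sub]⟩⟩

end IsBilin

section Subadjacent

variable {A0 A1 V0 V1 : Type*} [AddCommGroup A0] [Module K A0] [AddCommGroup A1] [Module K A1]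
  [AddCommGroup V0] [Module K V0] [AddCommGroup V1] [Module K V1]
  {d : A1 → A0} {m00 : A0 → A0 → A0} {m01 : A0 → A1 → A1} {m10 : A1 → A0 → A1}

theorem IsStrictPreLie2.isStrictLie2_commutator (h : IsStrictPreLie2 K d m00 m01 m10) :
    IsStrictLie2 K d (fun x y => m00 x y - m00 y x) (fun x a => m01 x a - m10 a x) where
  δ_lin := h.d_lin
  br0_bilin := h.m00_bilin.sub h.m00_bilin.flip
  br1_bilin := h.m01_bilin.sub h.m10_bilin.flip
  skew x y := (neg_sub _ _).symm
  δ_br1 x a := by rw [h.d_lin.map_sub, h.d_m01, h.d_m10]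
  br1_δ a b := by rw [h.d_mix, h.d_mix, neg_sub]
  jacobi0 x y z := by
    have hxyz := h.preLie0 x y z
    have hyzx := h.preLie0 y z x
    have hzxy := h.preLie0 z x y
    simp only [h.m00_bilin.map_sub_left, h.m00_bilin.map_sub_right]
    linear_combination (norm := abel) -hxyz - hyzx - hzxy
  jacobi1 x y b := by
    have hxyb := h.preLie1 x y b
    have hbxy := h.preLie2 b x y
    have hbyx := h.preLie2 b y x
    simp only [h.m01_bilin.map_sub_left, h.m01_bilin.map_sub_right, h.m10_bilin.map_sub_left,
      h.m10_bilin.map_sub_right]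
    linear_combination (norm := abel) hxyb + hbxy - hbyx

variable {par : V1 → V0} {ρ00 μ00 : A0 → V0 → V0} {ρ01 μ01 : A0 → V1 → V1}
  {ρ1 μ1 : A1 → V0 → V1}

theorem IsStrictRepPreLie2.isStrictRepLie2_sub (hpar : IsLinearMap K par)
    (h : IsStrictRepPreLie2 K d m00 m01 m10 par ρ00 ρ01 ρ1 μ00 μ01 μ1) :
    IsStrictRepLie2 K d (fun x y => m00 x y - m00 y x) (fun x a => m01 x a - m10 a x) par
      (ρ00 - μ00) (ρ01 - μ01) (ρ1 - μ1) where
  ρ00_bilin := h.toRepLie.ρ00_bilin.sub h.μ00_bilin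
  ρ01_bilin := h.toRepLie.ρ01_bilin.sub h.μ01_bilin
  ρ1_bilin := h.toRepLie.ρ1_bilin.sub h.μ1_bilin
  chain x m := by
    simp only [Pi.sub_apply, hpar.map_sub, h.toRepLie.chain, h.μchain]
  comp0 a v := by
    simp only [Pi.sub_apply, hpar.map_sub, h.toRepLie.comp0, h.μcomp0]
  comp1 a m := by
    simp only [Pi.sub_apply, h.toRepLie.comp1, h.μcomp1]
  rep00 x y v := by
    have hρ := h.toRepLie.rep00 x y v
    have hμxy := h.eqA0 x y v
    have hμyx := h.eqA0 y x v
    simp only [Pi.sub_apply, h.toRepLie.ρ00_bilin.map_sub_left,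
      h.toRepLie.ρ00_bilin.map_sub_right, h.μ00_bilin.map_sub_left, h.μ00_bilin.map_sub_right]
      at hρ ⊢
    linear_combination (norm := abel) hρ - hμxy + hμyx
  rep01 x y m := by
    have hρ := h.toRepLie.rep01 x y m
    have hμxy := h.eqA1 x y m
    have hμyx := h.eqA1 y x m
    simp only [Pi.sub_apply, h.toRepLie.ρ01_bilin.map_sub_left,
      h.toRepLie.ρ01_bilin.map_sub_right, h.μ01_bilin.map_sub_left, h.μ01_bilin.map_sub_right]
      at hρ ⊢
    linear_combination (norm := abel) hρ - hμxy + hμyx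
  rep1 x a v := by
    have hρ := h.toRepLie.rep1 x a v
    have hμl := h.eqB x a v
    have hμr := h.eqC a x v
    simp only [Pi.sub_apply, h.toRepLie.ρ1_bilin.map_sub_left, h.toRepLie.ρ1_bilin.map_sub_right,
      h.μ1_bilin.map_sub_left, h.μ1_bilin.map_sub_right, h.toRepLie.ρ01_bilin.map_sub_right,
      h.μ01_bilin.map_sub_right] at hρ ⊢
    linear_combination (norm := abel) hρ - hμl + hμr

end Subadjacent

namespace IsMatchedPairPreLie2

variable {g0 g1 h0 h1 : Type*} [AddCommGroup g0] [Module K g0] [AddCommGroup g1] [Module K g1]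
  [AddCommGroup h0] [Module K h0] [AddCommGroup h1] [Module K h1]
  {d : g1 → g0} {m00 : g0 → g0 → g0} {m01 : g0 → g1 → g1} {m10 : g1 → g0 → g1}
  {d' : h1 → h0} {n00 : h0 → h0 → h0} {n01 : h0 → h1 → h1} {n10 : h1 → h0 → h1}
  {ρ00 μ00 : g0 → h0 → h0} {ρ01 μ01 : g0 → h1 → h1} {ρ1 μ1 : g1 → h0 → h1}
  {ρ00' μ00' : h0 → g0 → g0} {ρ01' μ01' : h0 → g1 → g1} {ρ1' μ1' : h1 → g0 → g1}

theorem symm (h : IsMatchedPairPreLie2 K d m00 m01 m10 d' n00 n01 n10 ρ00 ρ01 ρ1 μ00 μ01 μ1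
      ρ00' ρ01' ρ1' μ00' μ01' μ1') :
    IsMatchedPairPreLie2 K d' n00 n01 n10 d m00 m01 m10 ρ00' ρ01' ρ1' μ00' μ01' μ1'
      ρ00 ρ01 ρ1 μ00 μ01 μ1 :=
  ⟨h.alg', h.alg, h.rep', h.rep, h.eqM2, h.eqM1, h.eqM4, h.eqM3, h.eqM6, h.eqM5, h.eqM8, h.eqM7,
    h.eqM10, h.eqM9, h.eqM12, h.eqM11, h.eqM14, h.eqM13⟩

theorem lie_eqL1
    (h : IsMatchedPairPreLie2 K d m00 m01 m10 d' n00 n01 n10 ρ00 ρ01 ρ1 μ00 μ01 μ1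
      ρ00' ρ01' ρ1' μ00' μ01' μ1')
    (x' : h0) (x y : g0) :
    (ρ00' - μ00') x' (m00 x y - m00 y x) =
      (m00 x ((ρ00' - μ00') x' y) - m00 ((ρ00' - μ00') x' y) x)
        + (m00 ((ρ00' - μ00') x' x) y - m00 y ((ρ00' - μ00') x' x))
        + (ρ00' - μ00') ((ρ00 - μ00) y x') x - (ρ00' - μ00') ((ρ00 - μ00) x x') y := by
  have hρxy := h.eqM14 x' x y
  have hρyx := h.eqM14 x' y x
  have hμ := h.eqM3 x' x y
  simp only [Pi.sub_apply, h.alg.m00_bilin.map_sub_left, h.alg.m00_bilin.map_sub_right,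
    h.rep'.toRepLie.ρ00_bilin.map_sub_left, h.rep'.toRepLie.ρ00_bilin.map_sub_right,
    h.rep'.μ00_bilin.map_sub_left, h.rep'.μ00_bilin.map_sub_right] at hρxy hρyx hμ ⊢
  linear_combination (norm := abel) hρxy - hρyx - hμ

theorem lie_eqL3
    (h : IsMatchedPairPreLie2 K d m00 m01 m10 d' n00 n01 n10 ρ00 ρ01 ρ1 μ00 μ01 μ1
      ρ00' ρ01' ρ1' μ00' μ01' μ1')
    (h' : h1) (x y : g0) :
    (ρ1' - μ1') h' (m00 x y - m00 y x) =
      (m01 x ((ρ1' - μ1') h' y) - m10 ((ρ1' - μ1') h' y) x)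
        - (m01 y ((ρ1' - μ1') h' x) - m10 ((ρ1' - μ1') h' x) y)
        + (ρ1' - μ1') ((ρ01 - μ01) y h') x - (ρ1' - μ1') ((ρ01 - μ01) x h') y := by
  have hρxy := h.eqM12 h' x y
  have hρyx := h.eqM12 h' y x
  have hμ := h.eqM1 h' x y
  simp only [Pi.sub_apply, h.alg.m01_bilin.map_sub_right, h.alg.m10_bilin.map_sub_left,
    h.rep'.toRepLie.ρ1_bilin.map_sub_left, h.rep'.toRepLie.ρ1_bilin.map_sub_right,
    h.rep'.μ1_bilin.map_sub_left, h.rep'.μ1_bilin.map_sub_right] at hρxy hρyx hμ ⊢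
  linear_combination (norm := abel) hρxy - hρyx - hμ

theorem lie_eqL5
    (h : IsMatchedPairPreLie2 K d m00 m01 m10 d' n00 n01 n10 ρ00 ρ01 ρ1 μ00 μ01 μ1
      ρ00' ρ01' ρ1' μ00' μ01' μ1')
    (x' : h0) (x : g0) (a : g1) :
    (ρ01' - μ01') x' (m01 x a - m10 a x) =
      (m01 x ((ρ01' - μ01') x' a) - m10 ((ρ01' - μ01') x' a) x)
        + (m01 ((ρ00' - μ00') x' x) a - m10 a ((ρ00' - μ00') x' x))
        + (ρ1' - μ1') ((ρ1 - μ1) a x') x - (ρ01' - μ01') ((ρ00 - μ00) x x') a := by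
  have hρl := h.eqM8 x' x a
  have hρr := h.eqM10 x' a x
  have hμ := h.eqM5 x' x a
  simp only [Pi.sub_apply, h.alg.m01_bilin.map_sub_left, h.alg.m01_bilin.map_sub_right,
    h.alg.m10_bilin.map_sub_left, h.alg.m10_bilin.map_sub_right,
    h.rep'.toRepLie.ρ01_bilin.map_sub_left, h.rep'.toRepLie.ρ01_bilin.map_sub_right,
    h.rep'.μ01_bilin.map_sub_left, h.rep'.μ01_bilin.map_sub_right,
    h.rep'.toRepLie.ρ1_bilin.map_sub_left, h.rep'.μ1_bilin.map_sub_left] at hρl hρr hμ ⊢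
  linear_combination (norm := abel) hρl - hρr - hμ

end IsMatchedPairPreLie2

end PreLie2

open PreLie2 Module

theorem matched_pair_preLie2_gives_matched_pair_lie2_general
    {K : Type*} [Field K]
    {A0 A1 B0 B1 : Type*} [AddCommGroup A0] [Module K A0]
    [AddCommGroup A1] [Module K A1]
    [AddCommGroup B0] [Module K B0]
    [AddCommGroup B1] [Module K B1]
    (d : A1 →ₗ[K] A0) (m00 : A0 →ₗ[K] A0 →ₗ[K] A0) (m01 : A0 →ₗ[K] A1 →ₗ[K] A1)
    (m10 : A1 →ₗ[K] A0 →ₗ[K] A1)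
    (d' : B1 →ₗ[K] B0) (n00 : B0 →ₗ[K] B0 →ₗ[K] B0) (n01 : B0 →ₗ[K] B1 →ₗ[K] B1)
    (n10 : B1 →ₗ[K] B0 →ₗ[K] B1)
    (ρ00 : A0 →ₗ[K] B0 →ₗ[K] B0) (ρ01 : A0 →ₗ[K] B1 →ₗ[K] B1) (ρ1 : A1 →ₗ[K] B0 →ₗ[K] B1)
    (μ00 : A0 →ₗ[K] B0 →ₗ[K] B0) (μ01 : A0 →ₗ[K] B1 →ₗ[K] B1) (μ1 : A1 →ₗ[K] B0 →ₗ[K] B1)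
    (ρ00' : B0 →ₗ[K] A0 →ₗ[K] A0) (ρ01' : B0 →ₗ[K] A1 →ₗ[K] A1) (ρ1' : B1 →ₗ[K] A0 →ₗ[K] A1)
    (μ00' : B0 →ₗ[K] A0 →ₗ[K] A0) (μ01' : B0 →ₗ[K] A1 →ₗ[K] A1) (μ1' : B1 →ₗ[K] A0 →ₗ[K] A1)
    (hmp : IsMatchedPairPreLie2 K (⇑d) (fun x y => m00 x y) (fun x a => m01 x a)
      (fun a x => m10 a x) (⇑d') (fun x y => n00 x y) (fun x a => n01 x a)
      (fun a x => n10 a x)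
      (fun x u => ρ00 x u) (fun x m => ρ01 x m) (fun a u => ρ1 a u)
      (fun x u => μ00 x u) (fun x m => μ01 x m) (fun a u => μ1 a u)
      (fun u x => ρ00' u x) (fun u a => ρ01' u a) (fun m x => ρ1' m x)
      (fun u x => μ00' u x) (fun u a => μ01' u a) (fun m x => μ1' m x)) :
    IsMatchedPairLie2 K
      (⇑d) (fun x y => m00 x y - m00 y x) (fun x a => m01 x a - m10 a x)
      (⇑d') (fun x y => n00 x y - n00 y x) (fun x a => n01 x a - n10 a x)
      (fun x u => ρ00 x u - μ00 x u) (fun x m => ρ01 x m - μ01 x m)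
      (fun a u => ρ1 a u - μ1 a u)
      (fun u x => ρ00' u x - μ00' u x) (fun u a => ρ01' u a - μ01' u a)
      (fun m x => ρ1' m x - μ1' m x) :=
  { lie := hmp.alg.isStrictLie2_commutator
    lie' := hmp.alg'.isStrictLie2_commutator
    rep := hmp.rep.isStrictRepLie2_sub d'.isLinear
    rep' := hmp.rep'.isStrictRepLie2_sub d.isLinear
    eqL1 := hmp.lie_eqL1
    eqL2 := hmp.symm.lie_eqL1
    eqL3 := hmp.lie_eqL3
    eqL4 := hmp.symm.lie_eqL3
    eqL5 := hmp.lie_eqL5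
    eqL6 := hmp.symm.lie_eqL5 }

/-- a matched pair of strict pre-Lie 2-algebras gives a matched pair of the
subadjacent strict Lie 2-algebras via `(ρ − μ, ρ' − μ')`. -/
theorem matched_pair_preLie2_gives_matched_pair_lie2
    {K : Type*} [Field K] [CharZero K]
    {A0 A1 B0 B1 : Type*} [AddCommGroup A0] [Module K A0] [FiniteDimensional K A0]
    [AddCommGroup A1] [Module K A1] [FiniteDimensional K A1]
    [AddCommGroup B0] [Module K B0] [FiniteDimensional K B0]
    [AddCommGroup B1] [Module K B1] [FiniteDimensional K B1]
    (d : A1 →ₗ[K] A0) (m00 : A0 →ₗ[K] A0 →ₗ[K] A0) (m01 : A0 →ₗ[K] A1 →ₗ[K] A1)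
    (m10 : A1 →ₗ[K] A0 →ₗ[K] A1)
    (d' : B1 →ₗ[K] B0) (n00 : B0 →ₗ[K] B0 →ₗ[K] B0) (n01 : B0 →ₗ[K] B1 →ₗ[K] B1)
    (n10 : B1 →ₗ[K] B0 →ₗ[K] B1)
    (ρ00 : A0 →ₗ[K] B0 →ₗ[K] B0) (ρ01 : A0 →ₗ[K] B1 →ₗ[K] B1) (ρ1 : A1 →ₗ[K] B0 →ₗ[K] B1)
    (μ00 : A0 →ₗ[K] B0 →ₗ[K] B0) (μ01 : A0 →ₗ[K] B1 →ₗ[K] B1) (μ1 : A1 →ₗ[K] B0 →ₗ[K] B1)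
    (ρ00' : B0 →ₗ[K] A0 →ₗ[K] A0) (ρ01' : B0 →ₗ[K] A1 →ₗ[K] A1) (ρ1' : B1 →ₗ[K] A0 →ₗ[K] A1)
    (μ00' : B0 →ₗ[K] A0 →ₗ[K] A0) (μ01' : B0 →ₗ[K] A1 →ₗ[K] A1) (μ1' : B1 →ₗ[K] A0 →ₗ[K] A1)
    (hmp : IsMatchedPairPreLie2 K (⇑d) (fun x y => m00 x y) (fun x a => m01 x a)
      (fun a x => m10 a x) (⇑d') (fun x y => n00 x y) (fun x a => n01 x a)
      (fun a x => n10 a x)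
      (fun x u => ρ00 x u) (fun x m => ρ01 x m) (fun a u => ρ1 a u)
      (fun x u => μ00 x u) (fun x m => μ01 x m) (fun a u => μ1 a u)
      (fun u x => ρ00' u x) (fun u a => ρ01' u a) (fun m x => ρ1' m x)
      (fun u x => μ00' u x) (fun u a => μ01' u a) (fun m x => μ1' m x)) :
    IsMatchedPairLie2 K
      (⇑d) (fun x y => m00 x y - m00 y x) (fun x a => m01 x a - m10 a x)
      (⇑d') (fun x y => n00 x y - n00 y x) (fun x a => n01 x a - n10 a x)
      (fun x u => ρ00 x u - μ00 x u) (fun x m => ρ01 x m - μ01 x m)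
      (fun a u => ρ1 a u - μ1 a u)
      (fun u x => ρ00' u x - μ00' u x) (fun u a => ρ01' u a - μ01' u a)
      (fun m x => ρ1' m x - μ1' m x) :=
  matched_pair_preLie2_gives_matched_pair_lie2_general d m00 m01 m10 d' n00 n01 n10 ρ00 ρ01 ρ1 μ00
    μ01 μ1 ρ00' ρ01' ρ1' μ00' μ01' μ1' hmp
end

section
/- Let (g, g'; (ν0,ν1), (ν0',ν1')) be a matched pair of strict Lie 2-algebras g = (g0, g1, δ, [·,·]) and g' = (g0', g1', δ', [·,·]'). Then the graded space (g0 ⊕ g0', g1 ⊕ g1') with differential δ + δ' and brackets [x+x', y+y'] = [x,y] + ν0(x)y' − ν0'(y')x + ν0'(x')y − ν0(y)x' + [x',y']' and [x+x', h+h'] = [x,h] + ν0(x)h' − ν1'(h')x − ν1(h)x' + ν0'(x')h + [x',h']', for x,y ∈ g0, h ∈ g1, x',y' ∈ g0', h' ∈ g1', is a strict Lie 2-algebra. -/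
/-!
The bracket on `(g0 ⊕ g0', g1 ⊕ g1')` is the bicrossed-product bracket of the matched pair.
Every axiom of a strict Lie 2-algebra splits into a `g`-component and a `g'`-component, and each
component is a linear combination of the corresponding axiom of `g` (resp. `g'`), the
representation identities of `ν'` (resp. `ν`), and the compatibility conditions (L1)–(L6).
-/

namespace PreLie2

section Bicross

variable {K : Type*} [Field K] {g0 g1 h0 h1 : Type*}
  [AddCommGroup g0] [Module K g0] [AddCommGroup g1] [Module K g1]
  [AddCommGroup h0] [Module K h0] [AddCommGroup h1] [Module K h1]
  {δ : g1 →ₗ[K] g0} {br0 : g0 →ₗ[K] g0 →ₗ[K] g0} {br1 : g0 →ₗ[K] g1 →ₗ[K] g1}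
  {δ' : h1 →ₗ[K] h0} {br0' : h0 →ₗ[K] h0 →ₗ[K] h0} {br1' : h0 →ₗ[K] h1 →ₗ[K] h1}
  {ν00 : g0 →ₗ[K] h0 →ₗ[K] h0} {ν01 : g0 →ₗ[K] h1 →ₗ[K] h1} {ν1 : g1 →ₗ[K] h0 →ₗ[K] h1}
  {ν00' : h0 →ₗ[K] g0 →ₗ[K] g0} {ν01' : h0 →ₗ[K] g1 →ₗ[K] g1} {ν1' : h1 →ₗ[K] g0 →ₗ[K] g1}

variable (br0 br0' ν00 ν00') in
def bicrossBr0 (p q : g0 × h0) : g0 × h0 :=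
  (br0 p.1 q.1 - ν00' q.2 p.1 + ν00' p.2 q.1, br0' p.2 q.2 + ν00 p.1 q.2 - ν00 q.1 p.2)

variable (br1 br1' ν01 ν1 ν01' ν1') in
def bicrossBr1 (p : g0 × h0) (a : g1 × h1) : g1 × h1 :=
  (br1 p.1 a.1 - ν1' a.2 p.1 + ν01' p.2 a.1, br1' p.2 a.2 + ν01 p.1 a.2 - ν1 a.1 p.2)

theorem isBilin_bicrossBr0 : IsBilin K (bicrossBr0 br0 br0' ν00 ν00') := by
  refine ⟨fun p => ⟨fun q r => ?_, fun c q => ?_⟩, fun q => ⟨fun p r => ?_, fun c p => ?_⟩⟩ <;>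
    simp only [bicrossBr0, Prod.fst_add, Prod.snd_add, Prod.smul_fst, Prod.smul_snd, map_add,
      map_smul, LinearMap.add_apply, LinearMap.smul_apply, Prod.mk_add_mk, Prod.smul_mk,
      Prod.mk.injEq] <;>
    constructor <;> module

theorem isBilin_bicrossBr1 : IsBilin K (bicrossBr1 br1 br1' ν01 ν1 ν01' ν1') := by
  refine ⟨fun p => ⟨fun q r => ?_, fun c q => ?_⟩, fun q => ⟨fun p r => ?_, fun c p => ?_⟩⟩ <;>
    simp only [bicrossBr1, Prod.fst_add, Prod.snd_add, Prod.smul_fst, Prod.smul_snd, map_add,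
      map_smul, LinearMap.add_apply, LinearMap.smul_apply, Prod.mk_add_mk, Prod.smul_mk,
      Prod.mk.injEq] <;>
    constructor <;> module

theorem bicrossBr0_skew
    (hmp : IsMatchedPairLie2 K δ (br0 · ·) (br1 · ·) δ' (br0' · ·) (br1' · ·)
      (ν00 · ·) (ν01 · ·) (ν1 · ·) (ν00' · ·) (ν01' · ·) (ν1' · ·)) (p q : g0 × h0) :
    bicrossBr0 br0 br0' ν00 ν00' p q = -bicrossBr0 br0 br0' ν00 ν00' q p := by
  simp only [bicrossBr0, Prod.neg_mk, Prod.mk.injEq]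
  constructor
  · linear_combination (norm := module) hmp.lie.skew p.1 q.1
  · linear_combination (norm := module) hmp.lie'.skew p.2 q.2

theorem prodMap_bicrossBr1
    (hmp : IsMatchedPairLie2 K δ (br0 · ·) (br1 · ·) δ' (br0' · ·) (br1' · ·)
      (ν00 · ·) (ν01 · ·) (ν1 · ·) (ν00' · ·) (ν01' · ·) (ν1' · ·)) (p : g0 × h0) (a : g1 × h1) :
    Prod.map δ δ' (bicrossBr1 br1 br1' ν01 ν1 ν01' ν1' p a) =
      bicrossBr0 br0 br0' ν00 ν00' p (Prod.map δ δ' a) := by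
  simp only [bicrossBr0, bicrossBr1, Prod.map, map_add, map_sub, Prod.mk.injEq]
  constructor
  · linear_combination (norm := module)
      hmp.lie.δ_br1 p.1 a.1 + hmp.rep'.comp0 a.2 p.1 - hmp.rep'.chain p.2 a.1
  · linear_combination (norm := module)
      hmp.lie'.δ_br1 p.2 a.2 - hmp.rep.chain p.1 a.2 + hmp.rep.comp0 a.1 p.2

theorem bicrossBr1_prodMap_skew
    (hmp : IsMatchedPairLie2 K δ (br0 · ·) (br1 · ·) δ' (br0' · ·) (br1' · ·)
      (ν00 · ·) (ν01 · ·) (ν1 · ·) (ν00' · ·) (ν01' · ·) (ν1' · ·)) (a b : g1 × h1) :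
    bicrossBr1 br1 br1' ν01 ν1 ν01' ν1' (Prod.map δ δ' a) b =
      -bicrossBr1 br1 br1' ν01 ν1 ν01' ν1' (Prod.map δ δ' b) a := by
  simp only [bicrossBr1, Prod.map_fst, Prod.map_snd, Prod.neg_mk, Prod.mk.injEq]
  constructor
  · linear_combination (norm := module)
      hmp.lie.br1_δ a.1 b.1 + hmp.rep'.comp1 a.2 b.1 + hmp.rep'.comp1 b.2 a.1
  · linear_combination (norm := module)
      hmp.lie'.br1_δ a.2 b.2 + hmp.rep.comp1 a.1 b.2 + hmp.rep.comp1 b.1 a.2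

theorem bicrossBr0_jacobi
    (hmp : IsMatchedPairLie2 K δ (br0 · ·) (br1 · ·) δ' (br0' · ·) (br1' · ·)
      (ν00 · ·) (ν01 · ·) (ν1 · ·) (ν00' · ·) (ν01' · ·) (ν1' · ·)) (p q r : g0 × h0) :
    bicrossBr0 br0 br0' ν00 ν00' (bicrossBr0 br0 br0' ν00 ν00' p q) r
      + bicrossBr0 br0 br0' ν00 ν00' (bicrossBr0 br0 br0' ν00 ν00' q r) p
      + bicrossBr0 br0 br0' ν00 ν00' (bicrossBr0 br0 br0' ν00 ν00' r p) q = 0 := by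
  obtain ⟨x, u⟩ := p
  obtain ⟨y, v⟩ := q
  obtain ⟨z, w⟩ := r
  simp only [bicrossBr0, map_add, map_sub, LinearMap.add_apply, LinearMap.sub_apply,
    Prod.mk_add_mk, Prod.mk_eq_zero]
  constructor
  · linear_combination (norm := module) hmp.lie.jacobi0 x y z
      - hmp.eqL1 w x y - hmp.eqL1 u y z - hmp.eqL1 v z x
      + hmp.rep'.rep00 u v z + hmp.rep'.rep00 v w x + hmp.rep'.rep00 w u y
      - hmp.lie.skew (ν00' w y) x - hmp.lie.skew (ν00' u z) y - hmp.lie.skew (ν00' v x) z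
  · linear_combination (norm := module) hmp.lie'.jacobi0 u v w
      - hmp.eqL2 z u v - hmp.eqL2 x v w - hmp.eqL2 y w u
      + hmp.rep.rep00 x y w + hmp.rep.rep00 y z u + hmp.rep.rep00 z x v
      - hmp.lie'.skew (ν00 z v) u - hmp.lie'.skew (ν00 x w) v - hmp.lie'.skew (ν00 y u) w

theorem bicrossBr1_jacobi
    (hmp : IsMatchedPairLie2 K δ (br0 · ·) (br1 · ·) δ' (br0' · ·) (br1' · ·)
      (ν00 · ·) (ν01 · ·) (ν1 · ·) (ν00' · ·) (ν01' · ·) (ν1' · ·)) (p q : g0 × h0) (a : g1 × h1) :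
    bicrossBr1 br1 br1' ν01 ν1 ν01' ν1' p (bicrossBr1 br1 br1' ν01 ν1 ν01' ν1' q a)
      - bicrossBr1 br1 br1' ν01 ν1 ν01' ν1' q (bicrossBr1 br1 br1' ν01 ν1 ν01' ν1' p a)
      - bicrossBr1 br1 br1' ν01 ν1 ν01' ν1' (bicrossBr0 br0 br0' ν00 ν00' p q) a = 0 := by
  obtain ⟨x, u⟩ := p
  obtain ⟨y, v⟩ := q
  obtain ⟨b, m⟩ := a
  simp only [bicrossBr0, bicrossBr1, map_add, map_sub, LinearMap.add_apply, LinearMap.sub_apply,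
    Prod.mk_sub_mk, Prod.mk_eq_zero]
  constructor
  · linear_combination (norm := module) hmp.lie.jacobi1 x y b
      + hmp.eqL3 m x y + hmp.eqL5 u y b - hmp.eqL5 v x b
      - hmp.rep'.rep1 v m x + hmp.rep'.rep1 u m y - hmp.rep'.rep01 u v b
  · linear_combination (norm := module) hmp.lie'.jacobi1 u v m
      + hmp.eqL4 b u v + hmp.eqL6 x v m - hmp.eqL6 y u m
      - hmp.rep.rep1 y b u + hmp.rep.rep1 x b v - hmp.rep.rep01 x y m

end Bicross

end PreLie2

open PreLie2 Module

theorem matched_pair_lie2_gives_sum_lie2_general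
    {K : Type*} [Field K]
    {g0 g1 h0 h1 : Type*} [AddCommGroup g0] [Module K g0] [AddCommGroup g1] [Module K g1]
    [AddCommGroup h0] [Module K h0] [AddCommGroup h1] [Module K h1]
    (δ : g1 →ₗ[K] g0) (br0 : g0 →ₗ[K] g0 →ₗ[K] g0) (br1 : g0 →ₗ[K] g1 →ₗ[K] g1)
    (δ' : h1 →ₗ[K] h0) (br0' : h0 →ₗ[K] h0 →ₗ[K] h0) (br1' : h0 →ₗ[K] h1 →ₗ[K] h1)
    (ν00 : g0 →ₗ[K] h0 →ₗ[K] h0) (ν01 : g0 →ₗ[K] h1 →ₗ[K] h1) (ν1 : g1 →ₗ[K] h0 →ₗ[K] h1)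
    (ν00' : h0 →ₗ[K] g0 →ₗ[K] g0) (ν01' : h0 →ₗ[K] g1 →ₗ[K] g1) (ν1' : h1 →ₗ[K] g0 →ₗ[K] g1)
    (hmp : IsMatchedPairLie2 K (⇑δ) (fun x y => br0 x y) (fun x a => br1 x a)
      (⇑δ') (fun x y => br0' x y) (fun x a => br1' x a)
      (fun x u => ν00 x u) (fun x m => ν01 x m) (fun a u => ν1 a u)
      (fun u x => ν00' u x) (fun u a => ν01' u a) (fun m x => ν1' m x)) :
    IsStrictLie2 K
      (fun p : g1 × h1 => ((δ p.1, δ' p.2) : g0 × h0))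
      (fun p q : g0 × h0 =>
        ((br0 p.1 q.1 - ν00' q.2 p.1 + ν00' p.2 q.1,
          br0' p.2 q.2 + ν00 p.1 q.2 - ν00 q.1 p.2) : g0 × h0))
      (fun (p : g0 × h0) (q : g1 × h1) =>
        ((br1 p.1 q.1 - ν1' q.2 p.1 + ν01' p.2 q.1,
          br1' p.2 q.2 + ν01 p.1 q.2 - ν1 q.1 p.2) : g1 × h1)) :=
  { δ_lin := (δ.prodMap δ').isLinear
    br0_bilin := isBilin_bicrossBr0
    br1_bilin := isBilin_bicrossBr1
    skew := bicrossBr0_skew hmp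
    δ_br1 := prodMap_bicrossBr1 hmp
    br1_δ := bicrossBr1_prodMap_skew hmp
    jacobi0 := bicrossBr0_jacobi hmp
    jacobi1 := bicrossBr1_jacobi hmp }

/-- a matched pair of strict Lie 2-algebras gives a strict Lie 2-algebra
structure on the direct sum. -/
theorem matched_pair_lie2_gives_sum_lie2
    {K : Type*} [Field K] [CharZero K]
    {g0 g1 h0 h1 : Type*} [AddCommGroup g0] [Module K g0] [FiniteDimensional K g0]
    [AddCommGroup g1] [Module K g1] [FiniteDimensional K g1]
    [AddCommGroup h0] [Module K h0] [FiniteDimensional K h0]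
    [AddCommGroup h1] [Module K h1] [FiniteDimensional K h1]
    (δ : g1 →ₗ[K] g0) (br0 : g0 →ₗ[K] g0 →ₗ[K] g0) (br1 : g0 →ₗ[K] g1 →ₗ[K] g1)
    (δ' : h1 →ₗ[K] h0) (br0' : h0 →ₗ[K] h0 →ₗ[K] h0) (br1' : h0 →ₗ[K] h1 →ₗ[K] h1)
    (ν00 : g0 →ₗ[K] h0 →ₗ[K] h0) (ν01 : g0 →ₗ[K] h1 →ₗ[K] h1) (ν1 : g1 →ₗ[K] h0 →ₗ[K] h1)
    (ν00' : h0 →ₗ[K] g0 →ₗ[K] g0) (ν01' : h0 →ₗ[K] g1 →ₗ[K] g1) (ν1' : h1 →ₗ[K] g0 →ₗ[K] g1)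
    (hmp : IsMatchedPairLie2 K (⇑δ) (fun x y => br0 x y) (fun x a => br1 x a)
      (⇑δ') (fun x y => br0' x y) (fun x a => br1' x a)
      (fun x u => ν00 x u) (fun x m => ν01 x m) (fun a u => ν1 a u)
      (fun u x => ν00' u x) (fun u a => ν01' u a) (fun m x => ν1' m x)) :
    IsStrictLie2 K
      (fun p : g1 × h1 => ((δ p.1, δ' p.2) : g0 × h0))
      (fun p q : g0 × h0 =>
        ((br0 p.1 q.1 - ν00' q.2 p.1 + ν00' p.2 q.1,
          br0' p.2 q.2 + ν00 p.1 q.2 - ν00 q.1 p.2) : g0 × h0))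
      (fun (p : g0 × h0) (q : g1 × h1) =>
        ((br1 p.1 q.1 - ν1' q.2 p.1 + ν01' p.2 q.1,
          br1' p.2 q.2 + ν01 p.1 q.2 - ν1 q.1 p.2) : g1 × h1)) :=
  matched_pair_lie2_gives_sum_lie2_general δ br0 br1 δ' br0' br1' ν00 ν01 ν1 ν00' ν01' ν1' hmp
end

section
/- Let A = (A0, A1, d, ·) be a finite-dimensional strict pre-Lie 2-algebra and let A* = (A1*, A0*, dᵀ, ∘) be a strict pre-Lie 2-algebra structure on the dual. Define α0 : A0 → (A1 ⊗ A0) ⊕ (A0 ⊗ A1) and α1 : A1 → A1 ⊗ A1 by ⟨α0(x), η ⊗ ξ⟩ = ⟨x, η∘ξ⟩, ⟨α0(x), ξ ⊗ η⟩ = ⟨x, ξ∘η⟩ for ξ ∈ A0*, η ∈ A1*, and ⟨α1(a), η ⊗ θ⟩ = ⟨a, η∘θ⟩ for η, θ ∈ A1*; define β1 : A0* → A0* ⊗ A0* and β0 : A1* → (A0* ⊗ A1*) ⊕ (A1* ⊗ A0*) by ⟨β1(ξ), x ⊗ y⟩ = ⟨ξ, x·y⟩, ⟨β0(η), x ⊗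 a⟩ = ⟨η, x·a⟩, ⟨β0(η), a ⊗ x⟩ = ⟨η, a·x⟩. For x ∈ A0 let Θ(x)(u ⊗ v) = (x·u) ⊗ v + u ⊗ (x·v − v·x) (using the appropriate multiplications, with x·u, x·v − v·x interpreted as 0 when undefined by degree reasons), and for a ∈ A1 let Ξ(a)(u ⊗ v) = (a·u) ⊗ v + u ⊗ (a·v − v·a) with the same convention; define Θ'(η), Ξ'(ζ) analogously for (A*, ∘) with η ∈ A1*, ζ ∈ A0*. Let L0*, L1*, 𝓛0*, 𝓛1* be as in the duality construction, i.e. ⟨L0*(x)ξ, u⟩ = −⟨ξ, x·u⟩, ⟨L1*(a)η, y⟩ = −⟨η, a·y⟩, and 𝓛0*, 𝓛1* act on A via minus the transpose of left ∘-multiplication. Then (G(A), G(A*); (L0*, L1*), (𝓛0*, 𝓛1*)) is a matched pair of strict Lie 2-algebras if and only if the cocycle identities hold: for all x, y ∈ A0, a ∈ A1, α0([x,y]) = Θ(x)α0(y) − Θ(y)α0(x) and α1([x,a]) = Θ(x)α1(a) − Ξ(a)α0(x), where [x,y] = x·y − y·x and [x,a] = x·a − a·x; and for all η, θ ∈ A1*,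 ζ ∈ A0*, β0([η,θ]') = Θ'(η)β0(θ) − Θ'(θ)β0(η) and β1([η,ζ]') = Θ'(η)β1(ζ) − Ξ'(ζ)β0(η), where [η,θ]' = η∘θ − θ∘η and [η,ζ]' = η∘ζ − ζ∘η. -/
open Module TensorProduct

namespace PreLieAux

variable {K : Type*} [Field K] {M N M' N' : Type*}
  [AddCommGroup M] [Module K M] [AddCommGroup N] [Module K N]
  [AddCommGroup M'] [Module K M'] [AddCommGroup N'] [Module K N']

theorem dual_ext {a b : M} (h : ∀ φ : Dual K M, φ a = φ b) : a = b := by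
  rw [← sub_eq_zero, ← Module.forall_dual_apply_eq_zero_iff K (a - b)]
  intro φ; simp [h φ]

theorem dd_map (φ : Dual K M) (ψ : Dual K N) (f : M' →ₗ[K] M) (g : N' →ₗ[K] N)
    (t : M' ⊗[K] N') :
    dualDistrib K M N (φ ⊗ₜ[K] ψ) (TensorProduct.map f g t)
      = dualDistrib K M' N' ((φ ∘ₗ f) ⊗ₜ[K] (ψ ∘ₗ g)) t := by
  induction t with
  | zero => simp
  | tmul m n => simp [dualDistrib_apply]
  | add x y hx hy => simp [map_add, hx, hy]

theorem dd_map_left (f : Dual K M' →ₗ[K] Dual K M) (t : Dual K M' ⊗[K] Dual K N) (x : M) (n : N) :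
    dualDistrib K M N (TensorProduct.map f LinearMap.id t) (x ⊗ₜ[K] n)
      = f ((dualDistrib K M' N t) ∘ₗ ((TensorProduct.mk K M' N).flip n)) x := by
  induction t with
  | zero => simp
  | tmul u v =>
      simp only [map_tmul, LinearMap.id_coe, id_eq, dualDistrib_apply]
      have : (dualDistrib K M' N (u ⊗ₜ[K] v)) ∘ₗ ((TensorProduct.mk K M' N).flip n)
          = v n • u := by
        ext y; simp [dualDistrib_apply, mul_comm]
      rw [this, map_smul]; simp [mul_comm]
  | add s t hs ht =>
      rw [map_add, map_add, LinearMap.add_apply, hs, ht]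
      simp only [map_add, LinearMap.add_comp, LinearMap.add_apply]

theorem dd_map_right (g : Dual K N' →ₗ[K] Dual K N) (t : Dual K M ⊗[K] Dual K N') (x : M) (n : N) :
    dualDistrib K M N (TensorProduct.map LinearMap.id g t) (x ⊗ₜ[K] n)
      = g ((dualDistrib K M N' t) ∘ₗ (TensorProduct.mk K M N' x)) n := by
  induction t with
  | zero => simp
  | tmul u v =>
      simp only [map_tmul, LinearMap.id_coe, id_eq, dualDistrib_apply]
      have : (dualDistrib K M N' (u ⊗ₜ[K] v)) ∘ₗ (TensorProduct.mk K M N' x) = u x • v := by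
        ext y; simp [dualDistrib_apply]
      rw [this, map_smul]; simp
  | add s t hs ht =>
      rw [map_add, map_add, LinearMap.add_apply, hs, ht]
      simp only [map_add, LinearMap.add_comp, LinearMap.add_apply]

theorem dd_inj [FiniteDimensional K M] [FiniteDimensional K N] :
    Function.Injective ⇑(dualDistrib K M N) := by
  have : ⇑(dualDistribEquiv K M N) = ⇑(dualDistrib K M N) := rfl
  rw [← this]; exact (dualDistribEquiv K M N).injective

theorem dd_surj [FiniteDimensional K M] [FiniteDimensional K N] :
    Function.Surjective ⇑(dualDistrib K M N) := by
  have : ⇑(dualDistribEquiv K M N) = ⇑(dualDistrib K M N) := rfl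
  rw [← this]; exact (dualDistribEquiv K M N).surjective

theorem tensor_ext [FiniteDimensional K M] [FiniteDimensional K N] {t s : M ⊗[K] N}
    (h : ∀ (φ : Dual K M) (ψ : Dual K N),
      dualDistrib K M N (φ ⊗ₜ[K] ψ) t = dualDistrib K M N (φ ⊗ₜ[K] ψ) s) : t = s := by
  apply dual_ext (K := K)
  intro F
  obtain ⟨u, rfl⟩ := dd_surj (K := K) (M := M) (N := N) F
  induction u with
  | zero => simp
  | tmul φ ψ => exact h φ ψ
  | add u v hu hv => simp only [map_add, LinearMap.add_apply, hu, hv]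

theorem tensor_dual_ext [FiniteDimensional K M] [FiniteDimensional K N]
    {t s : Dual K M ⊗[K] Dual K N}
    (h : ∀ (x : M) (n : N),
      dualDistrib K M N t (x ⊗ₜ[K] n) = dualDistrib K M N s (x ⊗ₜ[K] n)) : t = s := by
  apply dd_inj (K := K)
  exact TensorProduct.ext' h

end PreLieAux




open PreLie2 Module LinearMap TensorProduct

set_option maxHeartbeats 2000000 in

/-- `(G(A), G(A*); (L0*, L1*), (𝓛0*, 𝓛1*))` is a matched pair of strict Lie
2-algebras iff the cocycle identities hold for the (co)multiplications `α0, α1` (dual to the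
multiplication of `A*`) and `β0, β1` (dual to the multiplication of `A`); that is, iff
`(A, A*)` is a strict pre-Lie 2-bialgebra. -/
theorem matched_pair_lie2_iff_preLie2_bialgebra_cocycles
    {K : Type*} [Field K] [CharZero K]
    {A0 A1 : Type*} [AddCommGroup A0] [Module K A0] [FiniteDimensional K A0]
    [AddCommGroup A1] [Module K A1] [FiniteDimensional K A1]
    -- the strict pre-Lie 2-algebra `A`
    (d : A1 →ₗ[K] A0) (m00 : A0 →ₗ[K] A0 →ₗ[K] A0) (m01 : A0 →ₗ[K] A1 →ₗ[K] A1)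
    (m10 : A1 →ₗ[K] A0 →ₗ[K] A1)
    (hA : IsStrictPreLie2 K (⇑d) (fun x y => m00 x y) (fun x a => m01 x a) (fun a x => m10 a x))
    -- the strict pre-Lie 2-algebra `A* = (A1*, A0*, dᵀ, ∘)` on the dual
    (c00 : Dual K A1 →ₗ[K] Dual K A1 →ₗ[K] Dual K A1)
    (c01 : Dual K A1 →ₗ[K] Dual K A0 →ₗ[K] Dual K A0)
    (c10 : Dual K A0 →ₗ[K] Dual K A1 →ₗ[K] Dual K A0)
    (hA' : IsStrictPreLie2 K (fun ξ : Dual K A0 => d.dualMap ξ)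
      (fun η θ => c00 η θ) (fun η ζ => c01 η ζ) (fun ζ η => c10 ζ η))
    -- the cobrackets `α0, α1` dual to the multiplication of `A*`
    (α0 : A0 →ₗ[K] (A1 ⊗[K] A0) × (A0 ⊗[K] A1)) (α1 : A1 →ₗ[K] A1 ⊗[K] A1)
    (hα0a : ∀ (x : A0) (η : Dual K A1) (ξ : Dual K A0),
      dualDistrib K A1 A0 (η ⊗ₜ[K] ξ) (α0 x).1 = c01 η ξ x)
    (hα0b : ∀ (x : A0) (ξ : Dual K A0) (η : Dual K A1),
      dualDistrib K A0 A1 (ξ ⊗ₜ[K] η) (α0 x).2 = c10 ξ η x)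
    (hα1 : ∀ (a : A1) (η θ : Dual K A1),
      dualDistrib K A1 A1 (η ⊗ₜ[K] θ) (α1 a) = c00 η θ a)
    -- the cobrackets `β0, β1` dual to the multiplication of `A`
    (β1 : Dual K A0 →ₗ[K] Dual K A0 ⊗[K] Dual K A0)
    (β0 : Dual K A1 →ₗ[K] (Dual K A0 ⊗[K] Dual K A1) × (Dual K A1 ⊗[K] Dual K A0))
    (hβ1 : ∀ (ξ : Dual K A0) (x y : A0),
      dualDistrib K A0 A0 (β1 ξ) (x ⊗ₜ[K] y) = ξ (m00 x y))
    (hβ0a : ∀ (η : Dual K A1) (x : A0) (a : A1),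
      dualDistrib K A0 A1 ((β0 η).1) (x ⊗ₜ[K] a) = η (m01 x a))
    (hβ0b : ∀ (η : Dual K A1) (a : A1) (x : A0),
      dualDistrib K A1 A0 ((β0 η).2) (a ⊗ₜ[K] x) = η (m10 a x))
    -- the operators `𝓛0*` and `𝓛1*` of `A*` acting on `A0` and `A1`
    (ν00' : Dual K A1 →ₗ[K] A0 →ₗ[K] A0) (ν01' : Dual K A1 →ₗ[K] A1 →ₗ[K] A1)
    (ν1' : Dual K A0 →ₗ[K] A0 →ₗ[K] A1)
    (hν00' : ∀ (η : Dual K A1) (x : A0) (ξ : Dual K A0), ξ (ν00' η x) = -(c01 η ξ) x)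
    (hν01' : ∀ (η : Dual K A1) (a : A1) (θ : Dual K A1), θ (ν01' η a) = -(c00 η θ) a)
    (hν1' : ∀ (ζ : Dual K A0) (x : A0) (η : Dual K A1), η (ν1' ζ x) = -(c10 ζ η) x) :
    -- `(G(A), G(A*); (L0*, L1*), (𝓛0*, 𝓛1*))` is a matched pair of strict Lie 2-algebras
    IsMatchedPairLie2 K
      (⇑d) (fun x y => m00 x y - m00 y x) (fun x a => m01 x a - m10 a x)
      (fun ξ : Dual K A0 => d.dualMap ξ)
      (fun η θ => c00 η θ - c00 θ η) (fun η ζ => c01 η ζ - c10 ζ η)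
      (fun (x : A0) (η : Dual K A1) => -(η ∘ₗ m01 x))
      (fun (x : A0) (ξ : Dual K A0) => -(ξ ∘ₗ m00 x))
      (fun (a : A1) (η : Dual K A1) => -(η ∘ₗ m10 a))
      (fun η x => ν00' η x) (fun η a => ν01' η a) (fun ζ x => ν1' ζ x)
    ↔
    -- the `1`-cocycle identities
    ((∀ x y : A0, α0 (m00 x y - m00 y x) =
        (TensorProduct.map (m01 x) LinearMap.id (α0 y).1
            + TensorProduct.map LinearMap.id (m00 x - m00.flip x) (α0 y).1,
          TensorProduct.map (m00 x) LinearMap.id (α0 y).2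
            + TensorProduct.map LinearMap.id (m01 x - m10.flip x) (α0 y).2)
        - (TensorProduct.map (m01 y) LinearMap.id (α0 x).1
            + TensorProduct.map LinearMap.id (m00 y - m00.flip y) (α0 x).1,
          TensorProduct.map (m00 y) LinearMap.id (α0 x).2
            + TensorProduct.map LinearMap.id (m01 y - m10.flip y) (α0 x).2))
      ∧ (∀ (x : A0) (a : A1), α1 (m01 x a - m10 a x) =
        (TensorProduct.map (m01 x) LinearMap.id (α1 a)
            + TensorProduct.map LinearMap.id (m01 x - m10.flip x) (α1 a))
        - (TensorProduct.map LinearMap.id (m10 a - m01.flip a) (α0 x).1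
            + TensorProduct.map (m10 a) LinearMap.id (α0 x).2))
      ∧ (∀ η θ : Dual K A1, β0 (c00 η θ - c00 θ η) =
        (TensorProduct.map (c01 η) LinearMap.id (β0 θ).1
            + TensorProduct.map LinearMap.id (c00 η - c00.flip η) (β0 θ).1,
          TensorProduct.map (c00 η) LinearMap.id (β0 θ).2
            + TensorProduct.map LinearMap.id (c01 η - c10.flip η) (β0 θ).2)
        - (TensorProduct.map (c01 θ) LinearMap.id (β0 η).1
            + TensorProduct.map LinearMap.id (c00 θ - c00.flip θ) (β0 η).1,
          TensorProduct.map (c00 θ) LinearMap.id (β0 η).2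
            + TensorProduct.map LinearMap.id (c01 θ - c10.flip θ) (β0 η).2))
      ∧ (∀ (η : Dual K A1) (ζ : Dual K A0), β1 (c01 η ζ - c10 ζ η) =
        (TensorProduct.map (c01 η) LinearMap.id (β1 ζ)
            + TensorProduct.map LinearMap.id (c01 η - c10.flip η) (β1 ζ))
        - (TensorProduct.map LinearMap.id (c10 ζ - c01.flip ζ) (β0 η).1
            + TensorProduct.map (c10 ζ) LinearMap.id (β0 η).2))) := by
  classical
  have hc01 : ∀ (η : Dual K A1) (ξ : Dual K A0) (x : A0), c01 η ξ x = -(ξ (ν00' η x)) := by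
    intro η ξ x; rw [hν00' η x ξ, neg_neg]
  have hc00 : ∀ (η θ : Dual K A1) (a : A1), c00 η θ a = -(θ (ν01' η a)) := by
    intro η θ a; rw [hν01' η a θ, neg_neg]
  have hc10 : ∀ (ζ : Dual K A0) (η : Dual K A1) (x : A0), c10 ζ η x = -(η (ν1' ζ x)) := by
    intro ζ η x; rw [hν1' ζ x η, neg_neg]
  have sb1r : ∀ (ζ : Dual K A0) (x : A0),
      (dualDistrib K A0 A0 (β1 ζ)) ∘ₗ (TensorProduct.mk K A0 A0 x) = ζ ∘ₗ m00 x := by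
    intro ζ x; ext y; simp [hβ1]
  have sb1l : ∀ (ζ : Dual K A0) (y : A0),
      (dualDistrib K A0 A0 (β1 ζ)) ∘ₗ ((TensorProduct.mk K A0 A0).flip y) = ζ ∘ₗ m00.flip y := by
    intro ζ y; ext x; simp [hβ1]
  have sb0ar : ∀ (η : Dual K A1) (x : A0),
      (dualDistrib K A0 A1 ((β0 η).1)) ∘ₗ (TensorProduct.mk K A0 A1 x) = η ∘ₗ m01 x := by
    intro η x; ext a; simp [hβ0a]
  have sb0al : ∀ (η : Dual K A1) (a : A1),
      (dualDistrib K A0 A1 ((β0 η).1)) ∘ₗ ((TensorProduct.mk K A0 A1).flip a)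
        = η ∘ₗ m01.flip a := by
    intro η a; ext x; simp [hβ0a]
  have sb0br : ∀ (η : Dual K A1) (a : A1),
      (dualDistrib K A1 A0 ((β0 η).2)) ∘ₗ (TensorProduct.mk K A1 A0 a) = η ∘ₗ m10 a := by
    intro η a; ext x; simp [hβ0b]
  have sb0bl : ∀ (η : Dual K A1) (x : A0),
      (dualDistrib K A1 A0 ((β0 η).2)) ∘ₗ ((TensorProduct.mk K A1 A0).flip x)
        = η ∘ₗ m10.flip x := by
    intro η x; ext a; simp [hβ0b]
  -- the subadjacent strict Lie 2-algebra of `A`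
  have hlie : IsStrictLie2 K (⇑d) (fun x y => m00 x y - m00 y x)
      (fun x a => m01 x a - m10 a x) := by
    refine ⟨⟨d.map_add, d.map_smul⟩, ?_, ?_, ?_, ?_, ?_, ?_, ?_⟩
    · refine ⟨fun u => ⟨fun a b => ?_, fun r a => ?_⟩, fun u => ⟨fun a b => ?_, fun r a => ?_⟩⟩ <;>
        simp [map_sub, map_add, map_neg, map_smul, LinearMap.sub_apply, LinearMap.add_apply,
    LinearMap.neg_apply, LinearMap.smul_apply, LinearMap.comp_apply, LinearMap.flip_apply,
    LinearMap.dualMap_apply, smul_eq_mul, smul_sub] <;> abel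
    · refine ⟨fun u => ⟨fun a b => ?_, fun r a => ?_⟩, fun u => ⟨fun a b => ?_, fun r a => ?_⟩⟩ <;>
        simp [map_sub, map_add, map_neg, map_smul, LinearMap.sub_apply, LinearMap.add_apply,
    LinearMap.neg_apply, LinearMap.smul_apply, LinearMap.comp_apply, LinearMap.flip_apply,
    LinearMap.dualMap_apply, smul_eq_mul, smul_sub] <;> abel
    · intro x y; abel
    · intro x a; simp [map_sub, hA.d_m01, hA.d_m10]
    · intro a b; rw [hA.d_mix a b, ← hA.d_mix b a]; abel
    · intro x y z
      simp only [map_sub, map_add, LinearMap.sub_apply, LinearMap.add_apply]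
      linear_combination (norm := module)
        (-hA.preLie0 x y z - hA.preLie0 y z x - hA.preLie0 z x y)
    · intro x y b
      simp only [map_sub, map_add, LinearMap.sub_apply, LinearMap.add_apply]
      linear_combination (norm := module)
        (hA.preLie1 x y b + hA.preLie2 b x y - hA.preLie2 b y x)
  -- the subadjacent strict Lie 2-algebra of `A*`
  have hlie' : IsStrictLie2 K (fun ξ : Dual K A0 => d.dualMap ξ)
      (fun η θ => c00 η θ - c00 θ η) (fun η ζ => c01 η ζ - c10 ζ η) := by
    refine ⟨⟨fun a b => map_add _ a b, fun r a => map_smul _ r a⟩, ?_, ?_, ?_, ?_, ?_, ?_, ?_⟩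
    · refine ⟨fun u => ⟨fun a b => ?_, fun r a => ?_⟩, fun u => ⟨fun a b => ?_, fun r a => ?_⟩⟩ <;>
        simp [map_sub, map_add, map_neg, map_smul, LinearMap.sub_apply, LinearMap.add_apply,
    LinearMap.neg_apply, LinearMap.smul_apply, LinearMap.comp_apply, LinearMap.flip_apply,
    LinearMap.dualMap_apply, smul_eq_mul, smul_sub] <;> abel
    · refine ⟨fun u => ⟨fun a b => ?_, fun r a => ?_⟩, fun u => ⟨fun a b => ?_, fun r a => ?_⟩⟩ <;>
        simp [map_sub, map_add, map_neg, map_smul, LinearMap.sub_apply, LinearMap.add_apply,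
    LinearMap.neg_apply, LinearMap.smul_apply, LinearMap.comp_apply, LinearMap.flip_apply,
    LinearMap.dualMap_apply, smul_eq_mul, smul_sub] <;> abel
    · intro x y; abel
    · intro η ζ
      have e1 := hA'.d_m01 η ζ
      have e2 := hA'.d_m10 ζ η
      beta_reduce at e1 e2 ⊢
      rw [map_sub, e1, e2]
    · intro a b
      have e1 := hA'.d_mix a b
      have e2 := hA'.d_mix b a
      beta_reduce at e1 e2 ⊢
      rw [e1, ← e2]; abel
    · intro x y z; ext w
      have e1 := DFunLike.congr_fun (hA'.preLie0 x y z) w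
      have e2 := DFunLike.congr_fun (hA'.preLie0 y z x) w
      have e3 := DFunLike.congr_fun (hA'.preLie0 z x y) w
      simp only [map_sub, map_add, LinearMap.sub_apply, LinearMap.add_apply,
        LinearMap.zero_apply] at e1 e2 e3 ⊢
      linear_combination (-e1 - e2 - e3)
    · intro x y b; ext w
      have e1 := DFunLike.congr_fun (hA'.preLie1 x y b) w
      have e2 := DFunLike.congr_fun (hA'.preLie2 b x y) w
      have e3 := DFunLike.congr_fun (hA'.preLie2 b y x) w
      simp only [map_sub, map_add, LinearMap.sub_apply, LinearMap.add_apply,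
        LinearMap.zero_apply] at e1 e2 e3 ⊢
      linear_combination (e1 + e2 - e3)
  -- the dualized left multiplications of `A` form a representation
  have hrep : IsStrictRepLie2 K (⇑d) (fun x y => m00 x y - m00 y x)
      (fun x a => m01 x a - m10 a x) (fun ξ : Dual K A0 => d.dualMap ξ)
      (fun (x : A0) (η : Dual K A1) => -(η ∘ₗ m01 x))
      (fun (x : A0) (ξ : Dual K A0) => -(ξ ∘ₗ m00 x))
      (fun (a : A1) (η : Dual K A1) => -(η ∘ₗ m10 a)) := by
    refine ⟨?_, ?_, ?_, ?_, ?_, ?_, ?_, ?_, ?_⟩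
    · refine ⟨fun u => ⟨fun a b => ?_, fun r a => ?_⟩, fun u => ⟨fun a b => ?_, fun r a => ?_⟩⟩ <;>
        ext w <;> simp [map_sub, map_add, map_neg, map_smul, LinearMap.sub_apply, LinearMap.add_apply,
    LinearMap.neg_apply, LinearMap.smul_apply, LinearMap.comp_apply, LinearMap.flip_apply,
    LinearMap.dualMap_apply, smul_eq_mul] <;> ring
    · refine ⟨fun u => ⟨fun a b => ?_, fun r a => ?_⟩, fun u => ⟨fun a b => ?_, fun r a => ?_⟩⟩ <;>
        ext w <;> simp [map_sub, map_add, map_neg, map_smul, LinearMap.sub_apply, LinearMap.add_apply,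
    LinearMap.neg_apply, LinearMap.smul_apply, LinearMap.comp_apply, LinearMap.flip_apply,
    LinearMap.dualMap_apply, smul_eq_mul] <;> ring
    · refine ⟨fun u => ⟨fun a b => ?_, fun r a => ?_⟩, fun u => ⟨fun a b => ?_, fun r a => ?_⟩⟩ <;>
        ext w <;> simp [map_sub, map_add, map_neg, map_smul, LinearMap.sub_apply, LinearMap.add_apply,
    LinearMap.neg_apply, LinearMap.smul_apply, LinearMap.comp_apply, LinearMap.flip_apply,
    LinearMap.dualMap_apply, smul_eq_mul] <;> ring
    · intro x ξ; ext a; simp [map_sub, map_add, map_neg, map_smul, LinearMap.sub_apply, LinearMap.add_apply,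
    LinearMap.neg_apply, LinearMap.smul_apply, LinearMap.comp_apply, LinearMap.flip_apply,
    LinearMap.dualMap_apply, smul_eq_mul, hA.d_m01]
    · intro a η; ext b; simp [map_sub, map_add, map_neg, map_smul, LinearMap.sub_apply, LinearMap.add_apply,
    LinearMap.neg_apply, LinearMap.smul_apply, LinearMap.comp_apply, LinearMap.flip_apply,
    LinearMap.dualMap_apply, smul_eq_mul, hA.d_mix]
    · intro a ξ; ext x; simp [map_sub, map_add, map_neg, map_smul, LinearMap.sub_apply, LinearMap.add_apply,
    LinearMap.neg_apply, LinearMap.smul_apply, LinearMap.comp_apply, LinearMap.flip_apply,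
    LinearMap.dualMap_apply, smul_eq_mul, hA.d_m10]
    · intro x y η; ext a
      have e := congrArg (fun z => η z) (hA.preLie1 x y a)
      simp only [map_sub, map_add, map_neg, map_smul, LinearMap.sub_apply, LinearMap.add_apply,
    LinearMap.neg_apply, LinearMap.smul_apply, LinearMap.comp_apply, LinearMap.flip_apply,
    LinearMap.dualMap_apply, smul_eq_mul] at e ⊢
      all_goals first
      | linear_combination (e)
      | linear_combination -(e)
    · intro x y ξ; ext z
      have e := congrArg (fun z' => ξ z') (hA.preLie0 x y z)
      simp only [map_sub, map_add, map_neg, map_smul, LinearMap.sub_apply, LinearMap.add_apply,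
    LinearMap.neg_apply, LinearMap.smul_apply, LinearMap.comp_apply, LinearMap.flip_apply,
    LinearMap.dualMap_apply, smul_eq_mul] at e ⊢
      all_goals first
      | linear_combination (e)
      | linear_combination -(e)
    · intro x a η; ext y
      have e := congrArg (fun z => η z) (hA.preLie2 a x y)
      simp only [map_sub, map_add, map_neg, map_smul, LinearMap.sub_apply, LinearMap.add_apply,
    LinearMap.neg_apply, LinearMap.smul_apply, LinearMap.comp_apply, LinearMap.flip_apply,
    LinearMap.dualMap_apply, smul_eq_mul] at e ⊢
      all_goals first
      | linear_combination (e)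
      | linear_combination -(e)
  -- the dualized left multiplications of `A*` form a representation
  have hrep' : IsStrictRepLie2 K (fun ξ : Dual K A0 => d.dualMap ξ)
      (fun η θ => c00 η θ - c00 θ η) (fun η ζ => c01 η ζ - c10 ζ η) (⇑d)
      (fun η x => ν00' η x) (fun η a => ν01' η a) (fun ζ x => ν1' ζ x) := by
    refine ⟨?_, ?_, ?_, ?_, ?_, ?_, ?_, ?_, ?_⟩
    · exact ⟨fun u => ⟨fun a b => map_add _ a b, fun r a => map_smul _ r a⟩,
        fun u => ⟨fun a b => by simp [map_add], fun r a => by simp [map_smul]⟩⟩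
    · exact ⟨fun u => ⟨fun a b => map_add _ a b, fun r a => map_smul _ r a⟩,
        fun u => ⟨fun a b => by simp [map_add], fun r a => by simp [map_smul]⟩⟩
    · exact ⟨fun u => ⟨fun a b => map_add _ a b, fun r a => map_smul _ r a⟩,
        fun u => ⟨fun a b => by simp [map_add], fun r a => by simp [map_smul]⟩⟩
    · intro η m
      apply PreLieAux.dual_ext (K := K); intro ξ
      have e := DFunLike.congr_fun (hA'.d_m01 η ξ) m
      try simp only [map_sub, map_add, map_neg, map_smul, LinearMap.sub_apply, LinearMap.add_apply,
    LinearMap.neg_apply, LinearMap.smul_apply, LinearMap.comp_apply, LinearMap.flip_apply,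
    LinearMap.dualMap_apply, smul_eq_mul] at e
      rw [hν00' η (d m) ξ, show ξ (d (ν01' η m)) = (d.dualMap ξ) (ν01' η m) from rfl,
        hν01' η m (d.dualMap ξ)]
      try simp only [map_sub, map_add, map_neg, map_smul, LinearMap.sub_apply, LinearMap.add_apply,
    LinearMap.neg_apply, LinearMap.smul_apply, LinearMap.comp_apply, LinearMap.flip_apply,
    LinearMap.dualMap_apply, smul_eq_mul] at e ⊢
      all_goals first
      | linear_combination (e)
      | linear_combination -(e)
    · intro ζ x
      apply PreLieAux.dual_ext (K := K); intro ξ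
      have e := DFunLike.congr_fun (hA'.d_mix ζ ξ) x
      rw [hν00' (d.dualMap ζ) x ξ, show ξ (d (ν1' ζ x)) = (d.dualMap ξ) (ν1' ζ x) from rfl,
        hν1' ζ x (d.dualMap ξ)]
      try simp only [map_sub, map_add, map_neg, map_smul, LinearMap.sub_apply, LinearMap.add_apply,
    LinearMap.neg_apply, LinearMap.smul_apply, LinearMap.comp_apply, LinearMap.flip_apply,
    LinearMap.dualMap_apply, smul_eq_mul] at e ⊢
      all_goals first
      | linear_combination (e)
      | linear_combination -(e)
    · intro ζ m
      apply PreLieAux.dual_ext (K := K); intro θ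
      have e := DFunLike.congr_fun (hA'.d_m10 ζ θ) m
      rw [hν01' (d.dualMap ζ) m θ, hν1' ζ (d m) θ]
      try simp only [map_sub, map_add, map_neg, map_smul, LinearMap.sub_apply, LinearMap.add_apply,
    LinearMap.neg_apply, LinearMap.smul_apply, LinearMap.comp_apply, LinearMap.flip_apply,
    LinearMap.dualMap_apply, smul_eq_mul, hc10] at e ⊢
      all_goals first
      | linear_combination (e)
      | linear_combination -(e)
    · intro η θ x
      apply PreLieAux.dual_ext (K := K); intro ξ
      have e := DFunLike.congr_fun (hA'.preLie1 η θ ξ) x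
      try simp only [map_sub, map_add, map_neg, map_smul, LinearMap.sub_apply, LinearMap.add_apply,
    LinearMap.neg_apply, LinearMap.smul_apply, LinearMap.comp_apply, LinearMap.flip_apply,
    LinearMap.dualMap_apply, smul_eq_mul, hc01, hc00] at e ⊢
      all_goals first
      | linear_combination (e)
      | linear_combination -(e)
    · intro η θ a
      apply PreLieAux.dual_ext (K := K); intro τ
      have e := DFunLike.congr_fun (hA'.preLie0 η θ τ) a
      try simp only [map_sub, map_add, map_neg, map_smul, LinearMap.sub_apply, LinearMap.add_apply,
    LinearMap.neg_apply, LinearMap.smul_apply, LinearMap.comp_apply, LinearMap.flip_apply,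
    LinearMap.dualMap_apply, smul_eq_mul, hc00] at e ⊢
      all_goals first
      | linear_combination (e)
      | linear_combination -(e)
    · intro η ζ x
      apply PreLieAux.dual_ext (K := K); intro θ
      have e := DFunLike.congr_fun (hA'.preLie2 ζ η θ) x
      try simp only [map_sub, map_add, map_neg, map_smul, LinearMap.sub_apply, LinearMap.add_apply,
    LinearMap.neg_apply, LinearMap.smul_apply, LinearMap.comp_apply, LinearMap.flip_apply,
    LinearMap.dualMap_apply, smul_eq_mul, hc01, hc00, hc10] at e ⊢
      all_goals first
      | linear_combination (e)
      | linear_combination -(e)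
  constructor
  · rintro ⟨-, -, -, -, h1, h2, h3, h4, h5, h6⟩
    refine ⟨fun x y => ?_, fun x a => ?_, fun η θ => ?_, fun η ζ => ?_⟩
    · refine Prod.ext ?_ ?_
      · apply PreLieAux.tensor_ext (K := K); intro η ξ
        have e := congrArg (fun z => ξ z) (h1 η x y)
        simp only [map_sub, map_add, map_neg, LinearMap.sub_apply, LinearMap.add_apply, LinearMap.neg_apply,
    LinearMap.comp_apply, LinearMap.flip_apply, LinearMap.comp_id, LinearMap.id_comp,
    LinearMap.id_coe, id_eq, Prod.fst_sub, Prod.snd_sub, PreLieAux.dd_map,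
    PreLieAux.dd_map_left, PreLieAux.dd_map_right, sb1r, sb1l, sb0ar, sb0al, sb0br, sb0bl,
    hα0a, hα0b, hα1, hβ1, hβ0a, hβ0b, hc01, hc00, hc10] at e ⊢
        all_goals first
        | linear_combination (e)
        | linear_combination -(e)
      · apply PreLieAux.tensor_ext (K := K); intro ζ θ
        have e := congrArg (fun z => θ z) (h3 ζ x y)
        simp only [map_sub, map_add, map_neg, LinearMap.sub_apply, LinearMap.add_apply, LinearMap.neg_apply,
    LinearMap.comp_apply, LinearMap.flip_apply, LinearMap.comp_id, LinearMap.id_comp,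
    LinearMap.id_coe, id_eq, Prod.fst_sub, Prod.snd_sub, PreLieAux.dd_map,
    PreLieAux.dd_map_left, PreLieAux.dd_map_right, sb1r, sb1l, sb0ar, sb0al, sb0br, sb0bl,
    hα0a, hα0b, hα1, hβ1, hβ0a, hβ0b, hc01, hc00, hc10] at e ⊢
        all_goals first
        | linear_combination (e)
        | linear_combination -(e)
    · apply PreLieAux.tensor_ext (K := K); intro η θ
      have e := congrArg (fun z => θ z) (h5 η x a)
      simp only [map_sub, map_add, map_neg, LinearMap.sub_apply, LinearMap.add_apply, LinearMap.neg_apply,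
    LinearMap.comp_apply, LinearMap.flip_apply, LinearMap.comp_id, LinearMap.id_comp,
    LinearMap.id_coe, id_eq, Prod.fst_sub, Prod.snd_sub, PreLieAux.dd_map,
    PreLieAux.dd_map_left, PreLieAux.dd_map_right, sb1r, sb1l, sb0ar, sb0al, sb0br, sb0bl,
    hα0a, hα0b, hα1, hβ1, hβ0a, hβ0b, hc01, hc00, hc10] at e ⊢
      all_goals first
      | linear_combination (e)
      | linear_combination -(e)
    · refine Prod.ext ?_ ?_
      · apply PreLieAux.tensor_dual_ext (K := K); intro x a
        have e := DFunLike.congr_fun (h2 x η θ) a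
        simp only [map_sub, map_add, map_neg, LinearMap.sub_apply, LinearMap.add_apply, LinearMap.neg_apply,
    LinearMap.comp_apply, LinearMap.flip_apply, LinearMap.comp_id, LinearMap.id_comp,
    LinearMap.id_coe, id_eq, Prod.fst_sub, Prod.snd_sub, PreLieAux.dd_map,
    PreLieAux.dd_map_left, PreLieAux.dd_map_right, sb1r, sb1l, sb0ar, sb0al, sb0br, sb0bl,
    hα0a, hα0b, hα1, hβ1, hβ0a, hβ0b, hc01, hc00, hc10] at e ⊢
        all_goals first
        | linear_combination (e)
        | linear_combination -(e)
      · apply PreLieAux.tensor_dual_ext (K := K); intro a x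
        have e := DFunLike.congr_fun (h4 a η θ) x
        simp only [map_sub, map_add, map_neg, LinearMap.sub_apply, LinearMap.add_apply, LinearMap.neg_apply,
    LinearMap.comp_apply, LinearMap.flip_apply, LinearMap.comp_id, LinearMap.id_comp,
    LinearMap.id_coe, id_eq, Prod.fst_sub, Prod.snd_sub, PreLieAux.dd_map,
    PreLieAux.dd_map_left, PreLieAux.dd_map_right, sb1r, sb1l, sb0ar, sb0al, sb0br, sb0bl,
    hα0a, hα0b, hα1, hβ1, hβ0a, hβ0b, hc01, hc00, hc10] at e ⊢
        all_goals first
        | linear_combination (e)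
        | linear_combination -(e)
    · apply PreLieAux.tensor_dual_ext (K := K); intro x y
      have e := DFunLike.congr_fun (h6 x η ζ) y
      simp only [map_sub, map_add, map_neg, LinearMap.sub_apply, LinearMap.add_apply, LinearMap.neg_apply,
    LinearMap.comp_apply, LinearMap.flip_apply, LinearMap.comp_id, LinearMap.id_comp,
    LinearMap.id_coe, id_eq, Prod.fst_sub, Prod.snd_sub, PreLieAux.dd_map,
    PreLieAux.dd_map_left, PreLieAux.dd_map_right, sb1r, sb1l, sb0ar, sb0al, sb0br, sb0bl,
    hα0a, hα0b, hα1, hβ1, hβ0a, hβ0b, hc01, hc00, hc10] at e ⊢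
      all_goals first
      | linear_combination (e)
      | linear_combination -(e)
  · rintro ⟨hC1, hC2, hC3, hC4⟩
    refine ⟨hlie, hlie', hrep, hrep', ?_, ?_, ?_, ?_, ?_, ?_⟩
    · intro η x y
      apply PreLieAux.dual_ext (K := K); intro ξ
      have e := congrArg (fun t => dualDistrib K A1 A0 (η ⊗ₜ[K] ξ) t.1) (hC1 x y)
      simp only [map_sub, map_add, map_neg, LinearMap.sub_apply, LinearMap.add_apply, LinearMap.neg_apply,
    LinearMap.comp_apply, LinearMap.flip_apply, LinearMap.comp_id, LinearMap.id_comp,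
    LinearMap.id_coe, id_eq, Prod.fst_sub, Prod.snd_sub, PreLieAux.dd_map,
    PreLieAux.dd_map_left, PreLieAux.dd_map_right, sb1r, sb1l, sb0ar, sb0al, sb0br, sb0bl,
    hα0a, hα0b, hα1, hβ1, hβ0a, hβ0b, hc01, hc00, hc10] at e ⊢
      all_goals first
      | linear_combination (e)
      | linear_combination -(e)
    · intro x η θ; ext a
      have e := congrArg (fun t => dualDistrib K A0 A1 t.1 (x ⊗ₜ[K] a)) (hC3 η θ)
      simp only [map_sub, map_add, map_neg, LinearMap.sub_apply, LinearMap.add_apply, LinearMap.neg_apply,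
    LinearMap.comp_apply, LinearMap.flip_apply, LinearMap.comp_id, LinearMap.id_comp,
    LinearMap.id_coe, id_eq, Prod.fst_sub, Prod.snd_sub, PreLieAux.dd_map,
    PreLieAux.dd_map_left, PreLieAux.dd_map_right, sb1r, sb1l, sb0ar, sb0al, sb0br, sb0bl,
    hα0a, hα0b, hα1, hβ1, hβ0a, hβ0b, hc01, hc00, hc10] at e ⊢
      all_goals first
      | linear_combination (e)
      | linear_combination -(e)
    · intro ζ x y
      apply PreLieAux.dual_ext (K := K); intro θ
      have e := congrArg (fun t => dualDistrib K A0 A1 (ζ ⊗ₜ[K] θ) t.2) (hC1 x y)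
      simp only [map_sub, map_add, map_neg, LinearMap.sub_apply, LinearMap.add_apply, LinearMap.neg_apply,
    LinearMap.comp_apply, LinearMap.flip_apply, LinearMap.comp_id, LinearMap.id_comp,
    LinearMap.id_coe, id_eq, Prod.fst_sub, Prod.snd_sub, PreLieAux.dd_map,
    PreLieAux.dd_map_left, PreLieAux.dd_map_right, sb1r, sb1l, sb0ar, sb0al, sb0br, sb0bl,
    hα0a, hα0b, hα1, hβ1, hβ0a, hβ0b, hc01, hc00, hc10] at e ⊢
      all_goals first
      | linear_combination (e)
      | linear_combination -(e)
    · intro a η θ; ext y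
      have e := congrArg (fun t => dualDistrib K A1 A0 t.2 (a ⊗ₜ[K] y)) (hC3 η θ)
      simp only [map_sub, map_add, map_neg, LinearMap.sub_apply, LinearMap.add_apply, LinearMap.neg_apply,
    LinearMap.comp_apply, LinearMap.flip_apply, LinearMap.comp_id, LinearMap.id_comp,
    LinearMap.id_coe, id_eq, Prod.fst_sub, Prod.snd_sub, PreLieAux.dd_map,
    PreLieAux.dd_map_left, PreLieAux.dd_map_right, sb1r, sb1l, sb0ar, sb0al, sb0br, sb0bl,
    hα0a, hα0b, hα1, hβ1, hβ0a, hβ0b, hc01, hc00, hc10] at e ⊢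
      all_goals first
      | linear_combination (e)
      | linear_combination -(e)
    · intro η x a
      apply PreLieAux.dual_ext (K := K); intro θ
      have e := congrArg (fun t => dualDistrib K A1 A1 (η ⊗ₜ[K] θ) t) (hC2 x a)
      simp only [map_sub, map_add, map_neg, LinearMap.sub_apply, LinearMap.add_apply, LinearMap.neg_apply,
    LinearMap.comp_apply, LinearMap.flip_apply, LinearMap.comp_id, LinearMap.id_comp,
    LinearMap.id_coe, id_eq, Prod.fst_sub, Prod.snd_sub, PreLieAux.dd_map,
    PreLieAux.dd_map_left, PreLieAux.dd_map_right, sb1r, sb1l, sb0ar, sb0al, sb0br, sb0bl,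
    hα0a, hα0b, hα1, hβ1, hβ0a, hβ0b, hc01, hc00, hc10] at e ⊢
      all_goals first
      | linear_combination (e)
      | linear_combination -(e)
    · intro x η ζ; ext y
      have e := congrArg (fun t => dualDistrib K A0 A0 t (x ⊗ₜ[K] y)) (hC4 η ζ)
      simp only [map_sub, map_add, map_neg, LinearMap.sub_apply, LinearMap.add_apply, LinearMap.neg_apply,
    LinearMap.comp_apply, LinearMap.flip_apply, LinearMap.comp_id, LinearMap.id_comp,
    LinearMap.id_coe, id_eq, Prod.fst_sub, Prod.snd_sub, PreLieAux.dd_map,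
    PreLieAux.dd_map_left, PreLieAux.dd_map_right, sb1r, sb1l, sb0ar, sb0al, sb0br, sb0bl,
    hα0a, hα0b, hα1, hβ1, hβ0a, hβ0b, hc01, hc00, hc10] at e ⊢
      all_goals first
      | linear_combination (e)
      | linear_combination -(e)
end

section
/- Let (g0, g1, δ, [·,·]) be a strict Lie 2-algebra, let (ρ0, ρ1) be a strict representation of it on a two-term complex ∂ : V1 → V0, and let (T0, T1) be an O-operator associated to (ρ0, ρ1). Define multiplications on the complex by u·v = ρ0(T0 u)v, u·m = ρ0(T0 u)m, m·u = ρ1(T1 m)u for u,v ∈ V0, m ∈ V1. Then (V0, V1, ∂, ·) is a strict pre-Lie 2-algebra. -/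
namespace PreLie2

variable {K : Type*} [Field K]

theorem IsBilin.comp_left {M M' N P : Type*} [AddCommGroup M] [Module K M] [AddCommGroup M']
    [Module K M'] [AddCommGroup N] [Module K N] [AddCommGroup P] [Module K P]
    {f : M → N → P} (hf : IsBilin K f) {g : M' → M} (hg : IsLinearMap K g) :
    IsBilin K fun x y => f (g x) y :=
  ⟨fun x => hf.1 (g x), fun y => ((hf.2 y).mk' _ ∘ₗ hg.mk' g).isLinear⟩

namespace IsOOperator

variable {g0 g1 V0 V1 : Type*}
  [AddCommGroup g0] [Module K g0] [AddCommGroup g1] [Module K g1]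
  [AddCommGroup V0] [Module K V0] [AddCommGroup V1] [Module K V1]
  {δ : g1 → g0} {br0 : g0 → g0 → g0} {br1 : g0 → g1 → g1} {par : V1 → V0}
  {ρ00 : g0 → V0 → V0} {ρ01 : g0 → V1 → V1} {ρ1 : g1 → V0 → V1} {T0 : V0 → g0} {T1 : V1 → g1}

theorem ρ00_commutator (hrep : IsStrictRepLie2 K δ br0 br1 par ρ00 ρ01 ρ1)
    (hT : IsOOperator K δ br0 br1 par ρ00 ρ01 ρ1 T0 T1) (u v w : V0) :
    ρ00 (T0 (ρ00 (T0 u) v)) w - ρ00 (T0 (ρ00 (T0 v) u)) w =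
      ρ00 (T0 u) (ρ00 (T0 v) w) - ρ00 (T0 v) (ρ00 (T0 u) w) := by
  rw [← (hrep.ρ00_bilin.2 w).map_sub, ← hT.T0_lin.map_sub, hT.eq0, hrep.rep00]

theorem ρ01_commutator (hrep : IsStrictRepLie2 K δ br0 br1 par ρ00 ρ01 ρ1)
    (hT : IsOOperator K δ br0 br1 par ρ00 ρ01 ρ1 T0 T1) (u v : V0) (m : V1) :
    ρ01 (T0 (ρ00 (T0 u) v)) m - ρ01 (T0 (ρ00 (T0 v) u)) m =
      ρ01 (T0 u) (ρ01 (T0 v) m) - ρ01 (T0 v) (ρ01 (T0 u) m) := by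
  rw [← (hrep.ρ01_bilin.2 m).map_sub, ← hT.T0_lin.map_sub, hT.eq0, hrep.rep01]

theorem ρ1_commutator (hrep : IsStrictRepLie2 K δ br0 br1 par ρ00 ρ01 ρ1)
    (hT : IsOOperator K δ br0 br1 par ρ00 ρ01 ρ1 T0 T1) (m : V1) (u v : V0) :
    ρ1 (T1 (ρ1 (T1 m) u)) v - ρ1 (T1 (ρ01 (T0 u) m)) v =
      ρ1 (T1 m) (ρ00 (T0 u) v) - ρ01 (T0 u) (ρ1 (T1 m) v) := by
  rw [← (hrep.ρ1_bilin.2 v).map_sub, ← hT.T1_lin.map_sub, hT.eq1, (hrep.ρ1_bilin.2 v).map_neg,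
    hrep.rep1, neg_sub]

theorem isStrictPreLie2 (hrep : IsStrictRepLie2 K δ br0 br1 par ρ00 ρ01 ρ1)
    (hT : IsOOperator K δ br0 br1 par ρ00 ρ01 ρ1 T0 T1) (hpar : IsLinearMap K par) :
    IsStrictPreLie2 K par (fun u v => ρ00 (T0 u) v) (fun u m => ρ01 (T0 u) m)
      (fun m u => ρ1 (T1 m) u) where
  d_lin := hpar
  m00_bilin := hrep.ρ00_bilin.comp_left hT.T0_lin
  m01_bilin := hrep.ρ01_bilin.comp_left hT.T0_lin
  m10_bilin := hrep.ρ1_bilin.comp_left hT.T1_lin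
  d_m01 u m := (hrep.chain (T0 u) m).symm
  d_m10 m u := by rw [hT.chain, hrep.comp0]
  d_mix m n := by rw [hT.chain, hrep.comp1]
  preLie0 u v w := sub_eq_sub_iff_sub_eq_sub.mpr (hT.ρ00_commutator hrep u v w).symm
  preLie1 u v m := sub_eq_sub_iff_sub_eq_sub.mpr (hT.ρ01_commutator hrep u v m).symm
  preLie2 m u v := sub_eq_sub_iff_sub_eq_sub.mpr (hT.ρ1_commutator hrep m u v).symm

end IsOOperator

end PreLie2

open PreLie2 Module

theorem O_operator_gives_strict_preLie2_general
    {K : Type*} [Field K]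
    {g0 g1 V0 V1 : Type*} [AddCommGroup g0] [Module K g0]
    [AddCommGroup g1] [Module K g1]
    [AddCommGroup V0] [Module K V0]
    [AddCommGroup V1] [Module K V1]
    (δ : g1 →ₗ[K] g0) (br0 : g0 →ₗ[K] g0 →ₗ[K] g0) (br1 : g0 →ₗ[K] g1 →ₗ[K] g1)
    (par : V1 →ₗ[K] V0)
    (ρ00 : g0 →ₗ[K] V0 →ₗ[K] V0) (ρ01 : g0 →ₗ[K] V1 →ₗ[K] V1) (ρ1 : g1 →ₗ[K] V0 →ₗ[K] V1)
    (hrep : IsStrictRepLie2 K (⇑δ) (fun x y => br0 x y) (fun x a => br1 x a) (⇑par)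
      (fun x v => ρ00 x v) (fun x m => ρ01 x m) (fun a v => ρ1 a v))
    (T0 : V0 →ₗ[K] g0) (T1 : V1 →ₗ[K] g1)
    (hT : IsOOperator K (⇑δ) (fun x y => br0 x y) (fun x a => br1 x a) (⇑par)
      (fun x v => ρ00 x v) (fun x m => ρ01 x m) (fun a v => ρ1 a v) (⇑T0) (⇑T1)) :
    IsStrictPreLie2 K (⇑par)
      (fun u v => ρ00 (T0 u) v)
      (fun u m => ρ01 (T0 u) m)
      (fun m u => ρ1 (T1 m) u) :=
  hT.isStrictPreLie2 hrep par.isLinear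

/-- an `O`-operator on a strict Lie 2-algebra induces a strict pre-Lie
2-algebra structure on the underlying complex of the representation. -/
theorem O_operator_gives_strict_preLie2
    {K : Type*} [Field K] [CharZero K]
    {g0 g1 V0 V1 : Type*} [AddCommGroup g0] [Module K g0] [FiniteDimensional K g0]
    [AddCommGroup g1] [Module K g1] [FiniteDimensional K g1]
    [AddCommGroup V0] [Module K V0] [FiniteDimensional K V0]
    [AddCommGroup V1] [Module K V1] [FiniteDimensional K V1]
    (δ : g1 →ₗ[K] g0) (br0 : g0 →ₗ[K] g0 →ₗ[K] g0) (br1 : g0 →ₗ[K] g1 →ₗ[K] g1)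
    (hg : IsStrictLie2 K (⇑δ) (fun x y => br0 x y) (fun x a => br1 x a))
    (par : V1 →ₗ[K] V0)
    (ρ00 : g0 →ₗ[K] V0 →ₗ[K] V0) (ρ01 : g0 →ₗ[K] V1 →ₗ[K] V1) (ρ1 : g1 →ₗ[K] V0 →ₗ[K] V1)
    (hrep : IsStrictRepLie2 K (⇑δ) (fun x y => br0 x y) (fun x a => br1 x a) (⇑par)
      (fun x v => ρ00 x v) (fun x m => ρ01 x m) (fun a v => ρ1 a v))
    (T0 : V0 →ₗ[K] g0) (T1 : V1 →ₗ[K] g1)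
    (hT : IsOOperator K (⇑δ) (fun x y => br0 x y) (fun x a => br1 x a) (⇑par)
      (fun x v => ρ00 x v) (fun x m => ρ01 x m) (fun a v => ρ1 a v) (⇑T0) (⇑T1)) :
    IsStrictPreLie2 K (⇑par)
      (fun u v => ρ00 (T0 u) v)
      (fun u m => ρ01 (T0 u) m)
      (fun m u => ρ1 (T1 m) u) :=
  O_operator_gives_strict_preLie2_general δ br0 br1 par ρ00 ρ01 ρ1 hrep T0 T1 hT
end

section
/- Let (g0, g1, δ, [·,·]) be a strict Lie 2-algebra and (ρ0, ρ1) a strict representation on a two-term complex ∂ : V1 → V0. Then: (i) the bracket [x+a, y+b]_s = [x,y] + [x,b] − [y,a] makes g0 ⊕ g1 a Lie algebra, and the map (ρ0⊕ρ1)(x+a)(u+m) := ρ0(x)u + ρ0(x)m + ρ1(a)u defines a representation of the Lie algebra (g0 ⊕ g1, [·,·]_s) on V0 ⊕ V1, i.e. (ρ0⊕ρ1)([w,w']_s) = (ρ0⊕ρ1)(w)(ρ0⊕ρ1)(w') − (ρ0⊕ρ1)(w')(ρ0⊕ρ1)(w); (ii) a pair of linear maps T0 : V0 → g0, T1 : V1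 → g1 is an O-operator on the strict Lie 2-algebra associated to (ρ0, ρ1) if and only if T := T0 + T1 : V0 ⊕ V1 → g0 ⊕ g1 satisfies [T w, T w']_s = T((ρ0⊕ρ1)(T w)w' − (ρ0⊕ρ1)(T w')w) for all w, w' ∈ V0 ⊕ V1 (i.e. T is an O-operator on the Lie algebra (g0 ⊕ g1, [·,·]_s) associated to ρ0⊕ρ1) and T0 ∘ ∂ = δ ∘ T1. -/
open PreLie2 Module

/-- (i) a strict Lie 2-algebra with a strict representation gives a Lie
algebra `g0 ⊕ g1` with a representation on `V0 ⊕ V1`; (ii) `(T0, T1)` is an `O`-operator on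
the strict Lie 2-algebra iff `T0 + T1` is an `O`-operator on the Lie algebra `g0 ⊕ g1` and
`T0 ∘ ∂ = δ ∘ T1`. -/
theorem O_operator_iff_O_operator_on_sum
    {K : Type*} [Field K] [CharZero K]
    {g0 g1 V0 V1 : Type*} [AddCommGroup g0] [Module K g0] [FiniteDimensional K g0]
    [AddCommGroup g1] [Module K g1] [FiniteDimensional K g1]
    [AddCommGroup V0] [Module K V0] [FiniteDimensional K V0]
    [AddCommGroup V1] [Module K V1] [FiniteDimensional K V1]
    (δ : g1 →ₗ[K] g0) (br0 : g0 →ₗ[K] g0 →ₗ[K] g0) (br1 : g0 →ₗ[K] g1 →ₗ[K] g1)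
    (hg : IsStrictLie2 K (⇑δ) (fun x y => br0 x y) (fun x a => br1 x a))
    (par : V1 →ₗ[K] V0)
    (ρ00 : g0 →ₗ[K] V0 →ₗ[K] V0) (ρ01 : g0 →ₗ[K] V1 →ₗ[K] V1) (ρ1 : g1 →ₗ[K] V0 →ₗ[K] V1)
    (hrep : IsStrictRepLie2 K (⇑δ) (fun x y => br0 x y) (fun x a => br1 x a) (⇑par)
      (fun x v => ρ00 x v) (fun x m => ρ01 x m) (fun a v => ρ1 a v)) :
    -- (i) `[x+a, y+b]_s = [x,y] + [x,b] − [y,a]` is a Lie algebra structure on `g0 ⊕ g1`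
    (IsBilin K (fun p q : g0 × g1 => ((br0 p.1 q.1, br1 p.1 q.2 - br1 q.1 p.2) : g0 × g1))
      ∧ (∀ p q : g0 × g1,
          ((br0 p.1 q.1, br1 p.1 q.2 - br1 q.1 p.2) : g0 × g1)
            = -((br0 q.1 p.1, br1 q.1 p.2 - br1 p.1 q.2) : g0 × g1))
      ∧ (∀ p q r : g0 × g1,
          (fun p q : g0 × g1 => ((br0 p.1 q.1, br1 p.1 q.2 - br1 q.1 p.2) : g0 × g1))
              ((br0 p.1 q.1, br1 p.1 q.2 - br1 q.1 p.2)) r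
            + (fun p q : g0 × g1 => ((br0 p.1 q.1, br1 p.1 q.2 - br1 q.1 p.2) : g0 × g1))
              ((br0 q.1 r.1, br1 q.1 r.2 - br1 r.1 q.2)) p
            + (fun p q : g0 × g1 => ((br0 p.1 q.1, br1 p.1 q.2 - br1 q.1 p.2) : g0 × g1))
              ((br0 r.1 p.1, br1 r.1 p.2 - br1 p.1 r.2)) q = 0)
      -- and `ρ0 ⊕ ρ1` is a representation of this Lie algebra on `V0 ⊕ V1`
      ∧ IsBilin K (fun (p : g0 × g1) (w : V0 × V1) =>
          ((ρ00 p.1 w.1, ρ01 p.1 w.2 + ρ1 p.2 w.1) : V0 × V1))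
      ∧ (∀ (p q : g0 × g1) (w : V0 × V1),
          ((ρ00 (br0 p.1 q.1) w.1,
            ρ01 (br0 p.1 q.1) w.2 + ρ1 (br1 p.1 q.2 - br1 q.1 p.2) w.1) : V0 × V1)
          = ((ρ00 p.1 (ρ00 q.1 w.1),
              ρ01 p.1 (ρ01 q.1 w.2 + ρ1 q.2 w.1) + ρ1 p.2 (ρ00 q.1 w.1)) : V0 × V1)
            - ((ρ00 q.1 (ρ00 p.1 w.1),
              ρ01 q.1 (ρ01 p.1 w.2 + ρ1 p.2 w.1) + ρ1 q.2 (ρ00 p.1 w.1)) : V0 × V1)))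
    -- (ii) the `O`-operator condition is equivalent to the one on the sum
    ∧ (∀ (T0 : V0 →ₗ[K] g0) (T1 : V1 →ₗ[K] g1),
        IsOOperator K (⇑δ) (fun x y => br0 x y) (fun x a => br1 x a) (⇑par)
          (fun x v => ρ00 x v) (fun x m => ρ01 x m) (fun a v => ρ1 a v) (⇑T0) (⇑T1)
        ↔ ((∀ w w' : V0 × V1,
              ((br0 (T0 w.1) (T0 w'.1),
                br1 (T0 w.1) (T1 w'.2) - br1 (T0 w'.1) (T1 w.2)) : g0 × g1)
              = (T0 (ρ00 (T0 w.1) w'.1 - ρ00 (T0 w'.1) w.1),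
                  T1 ((ρ01 (T0 w.1) w'.2 + ρ1 (T1 w.2) w'.1)
                    - (ρ01 (T0 w'.1) w.2 + ρ1 (T1 w'.2) w.1))))
            ∧ ∀ m, T0 (par m) = δ (T1 m))) := by

  have j1 : ∀ x y b, br1 (br0 x y) b = br1 x (br1 y b) - br1 y (br1 x b) := by
    intro x y b
    have h := hg.jacobi1 x y b
    have h2 : br1 x (br1 y b) - br1 y (br1 x b) - br1 (br0 x y) b = 0 := h
    rw [sub_eq_zero] at h2
    exact h2.symm
  refine ⟨⟨?_, ?_, ?_, ?_, ?_⟩, ?_⟩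
  · -- bilinearity of the bracket
    constructor
    · intro p
      refine ⟨fun q r => ?_, fun c q => ?_⟩ <;>
        simp [Prod.ext_iff, smul_sub] <;> (try constructor) <;> (try abel)
    · intro q
      refine ⟨fun p r => ?_, fun c p => ?_⟩ <;>
        simp [Prod.ext_iff, smul_sub] <;> (try constructor) <;> (try abel)
  · -- skew symmetry
    intro p q
    have h0 := hg.skew p.1 q.1
    simp [Prod.ext_iff, h0]
    try abel
  · -- Jacobi
    intro p q r
    have h0 := hg.jacobi0 p.1 q.1 r.1
    simp only [Prod.mk_add_mk, Prod.mk_eq_zero, map_sub, LinearMap.sub_apply, j1]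
    constructor
    · exact h0
    · abel
  · -- bilinearity of the rep
    constructor
    · intro p
      refine ⟨fun w w' => ?_, fun c w => ?_⟩ <;>
        simp [Prod.ext_iff] <;> (try constructor) <;> (try abel)
    · intro w
      refine ⟨fun p q => ?_, fun c p => ?_⟩ <;>
        simp [Prod.ext_iff] <;> (try constructor) <;> (try abel)
  · -- rep equation
    intro p q w
    have h0 := hrep.rep00 p.1 q.1 w.1
    have h1 := hrep.rep01 p.1 q.1 w.2
    have h2 := hrep.rep1 p.1 q.2 w.1
    have h3 := hrep.rep1 q.1 p.2 w.1
    simp only [map_sub, LinearMap.sub_apply, map_add, Prod.mk_sub_mk, Prod.mk.injEq,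
      h0, h1, h2, h3]
    exact ⟨trivial, by abel⟩
  · -- (ii)
    intro T0 T1
    constructor
    · rintro ⟨_, _, hchain, heq0, heq1⟩
      refine ⟨fun w w' => ?_, hchain⟩
      have e0 := heq0 w.1 w'.1
      have e1 := heq1 w.2 w'.1
      have e2 := heq1 w'.2 w.1
      refine Prod.ext ?_ ?_
      · exact e0.symm
      · have : T1 ((ρ01 (T0 w.1)) w'.2 + (ρ1 (T1 w.2)) w'.1 -
            ((ρ01 (T0 w'.1)) w.2 + (ρ1 (T1 w'.2)) w.1)) =
            T1 ((ρ1 (T1 w.2)) w'.1 - (ρ01 (T0 w'.1)) w.2) -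
            T1 ((ρ1 (T1 w'.2)) w.1 - (ρ01 (T0 w.1)) w'.2) := by
          rw [← map_sub]; congr 1; abel
        rw [this, e1, e2]
        abel
    · rintro ⟨h, hchain⟩
      refine ⟨T0.isLinear, T1.isLinear, hchain, ?_, ?_⟩
      · intro u v
        have hh := h (u, 0) (v, 0)
        rw [Prod.ext_iff] at hh
        have h1 := hh.1
        dsimp only at h1
        exact h1.symm
      · intro m v
        have hh := h (0, m) (v, 0)
        rw [Prod.ext_iff] at hh
        have h2 := hh.2
        dsimp only at h2
        simp only [map_zero, LinearMap.zero_apply, zero_sub, sub_zero,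
          add_zero, zero_add] at h2
        rw [← h2]
        try congr 1
        try abel
end
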